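/- arXiv:2203.16272 — 15 statements merged into one kernel-verified Lean document; each statement's English description precedes it below -/
import Mathlib

section
/- Let (X,≼) be a Debreu upper separable partial order and let x, y ∈ X be incomparable (x ⋈ y). Then there exists a sequence (≼ₙ)ₙ≥₀ of partial orders on X with ≼₀ = ≼ and with ≼ₙ₊₁ extending ≼ₙ for all n ≥ 0, such that the limit ≼' = lim ≼ₙ is a Debreu separable linear extension of ≼ satisfying x ≼' y. -/
/-- A binary relation is a partial order: reflexive, antisymmetric, transitive. -/
def IsPartialOrderRel {X : Type*} (r : X → X → Prop) : Prop :=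
  (∀ x, r x x) ∧ (∀ x y, r x y → r y x → x = y) ∧ (∀ x y z, r x y → r y z → r x z)

/-- `r'` extends `r`. -/
def RelExtends {X : Type*} (r r' : X → X → Prop) : Prop :=
  ∀ x y, r x y → r' x y

/-- `r` is total: any two elements are comparable. -/
def TotalRel {X : Type*} (r : X → X → Prop) : Prop :=
  ∀ x y, r x y ∨ r y x

/-- `r'` is a linear extension of `r`: a total partial order extending `r`. -/
def IsLinearExtension {X : Type*} (r r' : X → X → Prop) : Prop :=
  IsPartialOrderRel r' ∧ TotalRel r' ∧ RelExtends r r'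

/-- `x` and `y` are incomparable with respect to `r`. -/
def Incomp {X : Type*} (r : X → X → Prop) (x y : X) : Prop :=
  ¬ r x y ∧ ¬ r y x

/-- `D` is Debreu dense for `r`. -/
def DebreuDense {X : Type*} (r : X → X → Prop) (D : Set X) : Prop :=
  ∀ x y, r x y → ¬ r y x → ∃ d ∈ D, r x d ∧ r d y

/-- `(X, r)` is Debreu separable: it has a countable Debreu dense subset. -/
def DebreuSeparable {X : Type*} (r : X → X → Prop) : Prop :=
  ∃ D : Set X, D.Countable ∧ DebreuDense r D

/-- The limit of a sequence of binary relations. -/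
def LimitRel {X : Type*} (r : ℕ → X → X → Prop) : X → X → Prop :=
  fun x y => ∃ n₀ : ℕ, ∀ n, n₀ ≤ n → r n x y

/-- `(X, r)` is Debreu upper separable. -/
def DebreuUpperSeparable {X : Type*} (r : X → X → Prop) : Prop :=
  ∃ D : Set X, D.Countable ∧ DebreuDense r D ∧
    ∀ x y, Incomp r x y → ∃ d ∈ D, Incomp r x d ∧ r d y

/-
A countable Debreu dense set `D` that also separates incomparable pairs from above determines
each point `z` by the two families of truth values `d ≼ z` and `¬ z ≼ d`, `d ∈ D`. Written as
binary digits and summed with the Cantor function of ratio `1/3`, they give an injective map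
`G : X → ℝ` that is monotone for `≼`; listing first a `d ∈ D` with `x ⋈ d ≼ y` makes the
leading digit force `G x < G y`. The order `u ≼' v ↔ G u ≤ G v` is then a linear extension, it is
Debreu separable like every order pulled back from `ℝ`, and the sequence `≼, ≼', ≼', …` has
limit `≼'`.
-/

section

open Function Set
open Cardinal (cantorFunction cantorFunction_injective cantorFunction_le
  increasing_cantorFunction)

variable {X : Type*} {r : X → X → Prop}

theorem eq_of_forall_mem_rel_iff (hr : IsPartialOrderRel r) {D : Set X} (hdense : DebreuDense r D)
    (hupper : ∀ u v, Incomp r u v → ∃ d ∈ D, Incomp r u d ∧ r d v) {u v : X}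
    (hbelow : ∀ d ∈ D, r d u ↔ r d v) (habove : ∀ d ∈ D, r u d ↔ r v d) : u = v := by
  obtain ⟨-, hanti, htrans⟩ := hr
  have symm_of_agree : ∀ a b, (∀ d ∈ D, r d a ↔ r d b) → (∀ d ∈ D, r a d ↔ r b d) →
      r a b → r b a := by
    intro a b hbelow habove hab
    by_contra hba
    obtain ⟨d, hd, had, hdb⟩ := hdense a b hab hba
    exact hba (htrans _ _ _ ((habove d hd).1 had) ((hbelow d hd).2 hdb))
  by_cases huv : r u v
  · exact hanti u v huv (symm_of_agree u v hbelow habove huv)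
  by_cases hvu : r v u
  · exact absurd (symm_of_agree v u (fun d hd => (hbelow d hd).symm)
      (fun d hd => (habove d hd).symm) hvu) huv
  obtain ⟨d, hd, hud, hdv⟩ := hupper u v ⟨huv, hvu⟩
  exact absurd ((hbelow d hd).2 hdv) hud.2

open Classical in
noncomputable def digits (r : X → X → Prop) (e : ℕ → X) (z : X) : ℕ → Bool :=
  Sum.elim (fun n => decide (r (e n) z)) (fun n => !decide (r z (e n))) ∘
    Equiv.natSumNatEquivNat.symm

theorem digits_two_mul (e : ℕ → X) (z : X) (n : ℕ) :
    digits r e z (2 * n) = true ↔ r (e n) z := by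
  simp [digits]

theorem digits_two_mul_add_one (e : ℕ → X) (z : X) (n : ℕ) :
    digits r e z (2 * n + 1) = true ↔ ¬ r z (e n) := by
  rw [show 2 * n + 1 = Equiv.natSumNatEquivNat (.inr n) by simp [Equiv.natSumNatEquivNat_apply]]
  simp [digits]

theorem digits_mono (htrans : ∀ a b c, r a b → r b c → r a c) (e : ℕ → X) {u v : X}
    (huv : r u v) (k : ℕ) : digits r e u k = true → digits r e v k = true := by
  obtain ⟨n, rfl | rfl⟩ := Nat.even_or_odd' k
  · simpa only [digits_two_mul] using fun h => htrans _ _ _ h huv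
  · simpa only [digits_two_mul_add_one] using fun h h' => h (htrans _ _ _ huv h')

theorem digits_injective (hr : IsPartialOrderRel r) {D : Set X} (hdense : DebreuDense r D)
    (hupper : ∀ u v, Incomp r u v → ∃ d ∈ D, Incomp r u d ∧ r d v) {e : ℕ → X}
    (he : D ⊆ range e) : Injective (digits r e) := by
  intro u v huv
  refine eq_of_forall_mem_rel_iff hr hdense hupper ?_ ?_ <;>
    rintro d hd <;> obtain ⟨n, rfl⟩ := he hd
  · rw [← digits_two_mul (r := r) e u n, ← digits_two_mul (r := r) e v n, huv]
  · rw [← not_iff_not, ← digits_two_mul_add_one (r := r) e u n,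
      ← digits_two_mul_add_one (r := r) e v n, huv]

theorem exists_seq_extends_limitRel_eq {R : X → X → Prop} (hr : IsPartialOrderRel r)
    (hR : IsPartialOrderRel R) (hrR : RelExtends r R) :
    ∃ S : ℕ → X → X → Prop, (∀ n, IsPartialOrderRel (S n)) ∧ S 0 = r ∧
      (∀ n, RelExtends (S n) (S (n + 1))) ∧ LimitRel S = R := by
  refine ⟨fun n => if n = 0 then r else R, fun n => ?_, rfl, fun n => ?_, ?_⟩
  · rcases n with _ | n
    exacts [hr, hR]
  · rcases n with _ | n
    exacts [hrR, fun _ _ => id]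
  · ext u v
    exact ⟨fun ⟨n₀, h⟩ => by simpa using h (n₀ + 1) n₀.le_succ,
      fun h => ⟨1, fun n hn => by simpa [Nat.one_le_iff_ne_zero.mp hn] using h⟩⟩

theorem isPartialOrderRel_comap {α : Type*} [PartialOrder α] {G : X → α} (hG : Injective G) :
    IsPartialOrderRel (fun u v => G u ≤ G v) :=
  ⟨fun _ => le_rfl, fun _ _ h h' => hG (le_antisymm h h'), fun _ _ _ => le_trans⟩

theorem totalRel_comap {α : Type*} [LinearOrder α] (G : X → α) :
    TotalRel (fun u v => G u ≤ G v) :=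
  fun u v => le_total (G u) (G v)

theorem debreuSeparable_comap_real (G : X → ℝ) : DebreuSeparable (fun u v => G u ≤ G v) := by
  obtain ⟨A, hAc, hAd⟩ := TopologicalSpace.exists_countable_dense (range G)
  set J := {t : range G | ∃ z, (t : ℝ) < z ∧ ∀ s : range G, t < s → z ≤ s}
  have hJc : J.Countable := countable_image_lt_image_Ioi (fun t : range G => (t : ℝ))
  -- a preimage of each point of a countable dense subset of `range G` and of each left end of a
  -- gap in `range G`
  refine ⟨rangeSplitting G '' (A ∪ J), (hAc.union hJc).image _, fun u v _ hvu => ?_⟩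
  have hlt : G u < G v := lt_of_not_ge hvu
  by_cases hgap : ∃ w, G w ∈ Ioo (G u) (G v)
  · obtain ⟨w, hw⟩ := hgap
    obtain ⟨t, htA, ht⟩ := hAd.exists_mem_open (isOpen_Ioo.preimage continuous_subtype_val)
      ⟨⟨G w, w, rfl⟩, hw⟩
    refine ⟨rangeSplitting G t, mem_image_of_mem _ (Or.inl htA), ?_⟩
    simpa only [apply_rangeSplitting] using And.intro ht.1.le ht.2.le
  · refine ⟨rangeSplitting G ⟨G u, u, rfl⟩, mem_image_of_mem _ (Or.inr ⟨G v, hlt, ?_⟩), ?_⟩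
    · rintro ⟨_, w, rfl⟩ hw
      exact le_of_not_gt fun hwv => hgap ⟨w, hw, hwv⟩
    · simpa only [apply_rangeSplitting] using And.intro le_rfl hlt.le

theorem exists_injective_extends_real_lt (hr : IsPartialOrderRel r)
    (hsep : DebreuUpperSeparable r) {x y : X} (hxy : Incomp r x y) :
    ∃ G : X → ℝ, Injective G ∧ RelExtends r (fun u v => G u ≤ G v) ∧ G x < G y := by
  obtain ⟨D, hDc, hdense, hupper⟩ := hsep
  obtain ⟨d₀, hd₀, hxd₀, hd₀y⟩ := hupper x y hxy
  obtain ⟨e', rfl⟩ := hDc.exists_eq_range ⟨d₀, hd₀⟩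
  let e : ℕ → X := fun | 0 => d₀ | n + 1 => e' n
  have he : range e' ⊆ range e := by
    rintro _ ⟨n, rfl⟩
    exact ⟨n + 1, rfl⟩
  have hx : digits r e x 0 = false := by
    simpa using (digits_two_mul (r := r) e x 0).not.2 hxd₀.2
  have hy : digits r e y 0 = true := (digits_two_mul e y 0).2 hd₀y
  refine ⟨cantorFunction (1 / 3) ∘ digits r e,
    (cantorFunction_injective (by norm_num) (by norm_num)).comp
      (digits_injective hr hdense hupper he),
    fun u v huv => cantorFunction_le (by norm_num) (by norm_num)
      (digits_mono hr.2.2 e huv),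
    increasing_cantorFunction (by norm_num) (by norm_num)
      (fun k hk => absurd hk k.not_lt_zero) hx hy⟩

end

theorem debreuUpperSeparable_limit_debreuSeparable_linearExtension {X : Type*}
    (r : X → X → Prop) (hr : IsPartialOrderRel r)
    (hsep : DebreuUpperSeparable r) (x y : X) (hxy : Incomp r x y) :
    ∃ S : ℕ → X → X → Prop,
      (∀ n, IsPartialOrderRel (S n)) ∧
      S 0 = r ∧
      (∀ n, RelExtends (S n) (S (n + 1))) ∧
      IsLinearExtension r (LimitRel S) ∧
      DebreuSeparable (LimitRel S) ∧
      LimitRel S x y := by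
  obtain ⟨G, hG, hrG, hGxy⟩ := exists_injective_extends_real_lt hr hsep hxy
  obtain ⟨S, hS, hS0, hSS, hlim⟩ :=
    exists_seq_extends_limitRel_eq hr (isPartialOrderRel_comap hG) hrG
  refine ⟨S, hS, hS0, hSS, ?_, ?_, ?_⟩ <;> rw [hlim]
  · exact ⟨isPartialOrderRel_comap hG, totalRel_comap G, hrG⟩
  · exact debreuSeparable_comap_real G
  · exact hGxy.le
end

section
/- Let X = ℝ \ {0}, and define x ≼ y iff (0 < x and 0 < y and x ≤ y) or (x < 0 and y < 0 and y ≤ x). Define x ≼' y iff x ≼ y, or (x·y < 0 and |x| < |y|), or (x < 0 < y and |x| = |y|). Then ≼' is a linear extension of the partial order ≼, and every Debreu dense subset D ⊆ X of (X,≼') is uncountable; in particular, (X,≼') is not Debreu separable. -/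
/-- The ground set `ℝ \ {0}`. -/
abbrev NzReal : Type := {x : ℝ // x ≠ 0}

/-- The partial order of Proposition 2: comparing within the positives and
(reversedly) within the negatives. -/
def rSep : NzReal → NzReal → Prop := fun x y =>
  (0 < x.1 ∧ 0 < y.1 ∧ x.1 ≤ y.1) ∨ (x.1 < 0 ∧ y.1 < 0 ∧ y.1 ≤ x.1)

/-- The linear extension of `rSep` from Proposition 2. -/
def rSep' : NzReal → NzReal → Prop := fun x y =>
  rSep x y ∨ (x.1 * y.1 < 0 ∧ |x.1| < |y.1|) ∨ (x.1 < 0 ∧ 0 < y.1 ∧ |x.1| = |y.1|)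

lemma rSep'_iff (x y : NzReal) :
    rSep' x y ↔ |x.1| < |y.1| ∨ (|x.1| = |y.1| ∧ x.1 ≤ y.1) := by
  obtain hx | hx := x.2.lt_or_gt <;> obtain hy | hy := y.2.lt_or_gt <;>
    simp only [rSep', rSep]
  · rw [abs_of_neg hx, abs_of_neg hy]
    constructor
    · rintro ((⟨h,_,_⟩|⟨_,_,h⟩)|⟨h,_⟩|⟨_,h,_⟩)
      · exact absurd h (by linarith)
      · rcases h.lt_or_eq with h | h
        · exact Or.inl (by linarith)
        · exact Or.inr ⟨by linarith, by linarith⟩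
      · exact absurd h (by nlinarith)
      · exact absurd h (by linarith)
    · rintro (h | ⟨h1, h2⟩)
      · exact Or.inl (Or.inr ⟨hx, hy, by linarith⟩)
      · exact Or.inl (Or.inr ⟨hx, hy, by linarith⟩)
  · rw [abs_of_neg hx, abs_of_pos hy]
    constructor
    · rintro ((⟨h,_,_⟩|⟨_,h,_⟩)|⟨_,h⟩|⟨_,_,h⟩)
      · exact absurd h (by linarith)
      · exact absurd h (by linarith)
      · exact Or.inl h
      · exact Or.inr ⟨h, by linarith⟩
    · rintro (h | ⟨h1, h2⟩)
      · exact Or.inr (Or.inl ⟨mul_neg_of_neg_of_pos hx hy, h⟩)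
      · exact Or.inr (Or.inr ⟨hx, hy, h1⟩)
  · rw [abs_of_pos hx, abs_of_neg hy]
    constructor
    · rintro ((⟨_,h,_⟩|⟨h,_,_⟩)|⟨_,h⟩|⟨h,_,_⟩)
      · exact absurd h (by linarith)
      · exact absurd h (by linarith)
      · exact Or.inl h
      · exact absurd h (by linarith)
    · rintro (h | ⟨h1, h2⟩)
      · exact Or.inr (Or.inl ⟨mul_neg_of_pos_of_neg hx hy, h⟩)
      · exact absurd h2 (by linarith)
  · rw [abs_of_pos hx, abs_of_pos hy]
    constructor
    · rintro ((⟨_,_,h⟩|⟨h,_,_⟩)|⟨h,_⟩|⟨h,_,_⟩)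
      · rcases h.lt_or_eq with h | h
        · exact Or.inl h
        · exact Or.inr ⟨h, h.le⟩
      · exact absurd h (by linarith)
      · exact absurd h (by nlinarith)
      · exact absurd h (by linarith)
    · rintro (h | ⟨h1, h2⟩)
      · exact Or.inl (Or.inl ⟨hx, hy, h.le⟩)
      · exact Or.inl (Or.inl ⟨hx, hy, h2⟩)

lemma abs_le_of_rSep' {x y : NzReal} (h : rSep' x y) : |x.1| ≤ |y.1| := by
  rcases (rSep'_iff x y).1 h with h | ⟨h, _⟩
  · exact h.le
  · exact h.le

lemma rSep_partial : IsPartialOrderRel rSep := by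
  refine ⟨fun x => ?_, fun x y h1 h2 => ?_, fun x y z h1 h2 => ?_⟩
  · rcases x.2.lt_or_gt with hx | hx
    · exact Or.inr ⟨hx, hx, le_refl _⟩
    · exact Or.inl ⟨hx, hx, le_refl _⟩
  · rcases h1 with ⟨a1,a2,a3⟩|⟨a1,a2,a3⟩ <;> rcases h2 with ⟨b1,b2,b3⟩|⟨b1,b2,b3⟩ <;>
      exact Subtype.ext (by linarith)
  · rcases h1 with ⟨a1,a2,a3⟩|⟨a1,a2,a3⟩ <;> rcases h2 with ⟨b1,b2,b3⟩|⟨b1,b2,b3⟩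
    · exact Or.inl ⟨a1, b2, by linarith⟩
    · exact absurd a2 (by linarith)
    · exact absurd a2 (by linarith)
    · exact Or.inr ⟨a1, b2, by linarith⟩

lemma rSep'_linext : IsLinearExtension rSep rSep' := by
  refine ⟨⟨fun x => ?_, fun x y h1 h2 => ?_, fun x y z h1 h2 => ?_⟩,
    fun x y => ?_, fun x y h => Or.inl h⟩
  · exact (rSep'_iff x x).2 (Or.inr ⟨rfl, le_refl _⟩)
  · rw [rSep'_iff] at h1 h2
    rcases h1 with h1 | ⟨h1, h1'⟩ <;> rcases h2 with h2 | ⟨h2, h2'⟩ <;>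
      first
      | exact absurd h1 (by linarith)
      | exact Subtype.ext (le_antisymm h1' h2')
  · rw [rSep'_iff] at h1 h2 ⊢
    rcases h1 with h1 | ⟨h1, h1'⟩ <;> rcases h2 with h2 | ⟨h2, h2'⟩
    · exact Or.inl (h1.trans h2)
    · exact Or.inl (by linarith)
    · exact Or.inl (by linarith)
    · exact Or.inr ⟨h1.trans h2, h1'.trans h2'⟩
  · rw [rSep'_iff, rSep'_iff]
    rcases lt_trichotomy |x.1| |y.1| with h | h | h
    · exact Or.inl (Or.inl h)
    · rcases le_total x.1 y.1 with h' | h'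
      · exact Or.inl (Or.inr ⟨h, h'⟩)
      · exact Or.inr (Or.inr ⟨h.symm, h'⟩)
    · exact Or.inr (Or.inl h)

lemma dense_abs {D : Set NzReal} (hD : DebreuDense rSep' D) :
    ∀ t : ℝ, 0 < t → ∃ d ∈ D, |d.1| = t := by
  intro t ht
  set a : NzReal := ⟨-t, neg_ne_zero.mpr ht.ne'⟩ with ha
  set b : NzReal := ⟨t, ht.ne'⟩ with hb
  have hab : rSep' a b := Or.inr (Or.inr ⟨by show -t < 0; linarith, ht, by show |-t| = |t|; simp⟩)
  have hnba : ¬ rSep' b a := by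
    rw [rSep'_iff]
    push_neg
    refine ⟨by show |-t| ≤ |t|; simp, fun _ => by show -t < t; linarith⟩
  obtain ⟨d, hdD, h1, h2⟩ := hD a b hab hnba
  have k1 := abs_le_of_rSep' h1
  have k2 := abs_le_of_rSep' h2
  refine ⟨d, hdD, ?_⟩
  simp only [ha, hb, abs_neg, abs_of_pos ht] at k1 k2
  linarith

lemma dense_uncountable (D : Set NzReal) (hD : DebreuDense rSep' D) : ¬ D.Countable := by
  intro hc
  have hsub : Set.range Real.exp ⊆ (fun d : NzReal => |d.1|) '' D := by
    rintro r ⟨t, rfl⟩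
    obtain ⟨d, hdD, hd⟩ := dense_abs hD (Real.exp t) (Real.exp_pos t)
    exact ⟨d, hdD, hd⟩
  have h1 : (Set.range Real.exp).Countable := (hc.image _).mono hsub
  have h2 : (Set.univ : Set ℝ).Countable := by
    have := h1.preimage Real.exp_injective
    rwa [Set.preimage_range] at this
  exact Cardinal.not_countable_real h2


theorem rSep'_linearExtension_not_debreuSeparable :
    IsPartialOrderRel rSep ∧
    IsLinearExtension rSep rSep' ∧
    (∀ D : Set NzReal, DebreuDense rSep' D → ¬ D.Countable) ∧
    ¬ DebreuSeparable rSep' := by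
  refine ⟨rSep_partial, rSep'_linext, dense_uncountable, ?_⟩
  rintro ⟨D, hc, hd⟩
  exact dense_uncountable D hd hc
end

section
/- Let (X,≼) be a partial order that has a countable multi-utility, and let x, y ∈ X be incomparable (x ⋈ y). Then there exists a sequence (≼ₙ)ₙ≥₀ of partial orders on X with ≼₀ = ≼ and with ≼ₙ₊₁ extending ≼ₙ for all n ≥ 0, such that the limit ≼' = lim ≼ₙ is a Debreu separable linear extension of ≼ satisfying x ≼' y. -/
/-!
The sets `{z | ¬ z ≼ x}` and `{z | q < uᵢ z}` (`i ∈ I`, `q ∈ ℚ`) form a countable family of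
up-sets separating `≼`: whenever `¬ z ≼ w`, one of them contains `z` but not `w`. Enumerate it as
`S₀, S₁, …` with `S₀ = {z | ¬ z ≼ x}` and read the membership pattern of `z` as a ternary expansion
`v z = ∑ₙ 3⁻ⁿ [z ∈ Sₙ]`. Since such expansions compare lexicographically, `v : X → ℝ` is monotone,
injective, and `v x < v y`. Pulling back `≤` along `v` gives a linear extension `≼'`, which is
Debreu separable because every subset of `ℝ` is (a countable dense part plus the countably many
left endpoints of gaps), and the sequence `≼, ≼', ≼', …` converges to it.
-/

open Function Set

section OrderSeparable

variable {α : Type*} [LinearOrder α] [TopologicalSpace α] [OrderTopology α]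
  [SecondCountableTopology α]

theorem exists_countable_subset_forall_lt_exists_mem_Icc (s : Set α) :
    ∃ D ⊆ s, D.Countable ∧ ∀ a ∈ s, ∀ b ∈ s, a < b → ∃ d ∈ D, a ≤ d ∧ d ≤ b := by
  obtain ⟨C, hCc, hCd⟩ := TopologicalSpace.exists_countable_dense s
  let gaps := {a ∈ s | ∃ z, a < z ∧ ∀ b ∈ s, a < b → z ≤ b}
  refine ⟨(↑) '' C ∪ gaps, union_subset (Subtype.coe_image_subset s C) (sep_subset _ _),
    (hCc.image _).union (countable_image_lt_image_Ioi_within s id), fun a ha b hb hab => ?_⟩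
  by_cases h : ∃ c ∈ s, a < c ∧ c < b
  · obtain ⟨c, hc, hac, hcb⟩ := h
    obtain ⟨d, hdC, hd⟩ :=
      hCd.exists_mem_open (isOpen_Ioo.preimage continuous_subtype_val) ⟨⟨c, hc⟩, hac, hcb⟩
    exact ⟨d, .inl ⟨d, hdC, rfl⟩, hd.1.le, hd.2.le⟩
  · exact ⟨a, .inr ⟨ha, b, hab, fun c hc hac => not_lt.1 fun hcb => h ⟨c, hc, hac, hcb⟩⟩,
      le_rfl, hab.le⟩

theorem debreuSeparable_comap {X : Type*} (f : X → α) :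
    DebreuSeparable fun a b => f a ≤ f b := by
  obtain ⟨D, hD, hDc, hDbtw⟩ := exists_countable_subset_forall_lt_exists_mem_Icc (range f)
  choose g hg using fun d : D => hD d.2
  have : Countable D := hDc.to_subtype
  refine ⟨range g, countable_range g, fun a b _ hba => ?_⟩
  obtain ⟨d, hd, had, hdb⟩ :=
    hDbtw _ (mem_range_self a) _ (mem_range_self b) (not_le.1 hba)
  exact ⟨g ⟨d, hd⟩, mem_range_self _, by simpa only [hg], by simpa only [hg]⟩

end OrderSeparable

theorem isLinearExtension_comap {X α : Type*} [LinearOrder α] {r : X → X → Prop} {f : X → α}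
    (hf : Injective f) (hmono : ∀ a b, r a b → f a ≤ f b) :
    IsLinearExtension r fun a b => f a ≤ f b :=
  ⟨⟨fun _ => le_rfl, fun _ _ hab hba => hf (le_antisymm hab hba), fun _ _ _ => le_trans⟩,
    fun a b => le_total (f a) (f b), hmono⟩

section CantorCode

variable {X : Type*} (S : ℕ → Set X)

open Classical in
noncomputable def cantorCode (z : X) : ℝ :=
  Cardinal.cantorFunction (1 / 3) fun n => decide (z ∈ S n)

variable {S}

theorem cantorCode_le_cantorCode {z w : X} (h : ∀ n, z ∈ S n → w ∈ S n) :
    cantorCode S z ≤ cantorCode S w :=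
  Cardinal.cantorFunction_le (by norm_num) (by norm_num) (by simpa using h)

theorem cantorCode_lt_cantorCode {z w : X} {n : ℕ} (hagree : ∀ k < n, (z ∈ S k ↔ w ∈ S k))
    (hz : z ∉ S n) (hw : w ∈ S n) : cantorCode S z < cantorCode S w :=
  Cardinal.increasing_cantorFunction (by norm_num) (by norm_num)
    (fun k hk => by simpa using hagree k hk) (by simpa using hz) (by simpa using hw)

theorem cantorCode_injective {r : X → X → Prop} (hanti : ∀ a b, r a b → r b a → a = b)
    (hsep : ∀ z w, ¬ r z w → ∃ n, z ∈ S n ∧ w ∉ S n) : Injective (cantorCode S) := by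
  intro z w hzw
  have hmem : ∀ n, z ∈ S n ↔ w ∈ S n := fun n => by
    simpa using congrFun (Cardinal.cantorFunction_injective (by norm_num) (by norm_num) hzw) n
  have hle : ∀ a b, (∀ n, a ∈ S n → b ∈ S n) → r a b := fun a b hab => by
    by_contra h
    obtain ⟨n, ha, hb⟩ := hsep a b h
    exact hb (hab n ha)
  exact hanti z w (hle z w fun n => (hmem n).1) (hle w z fun n => (hmem n).2)

end CantorCode

theorem exists_separating_upperSet_seq {X I : Type*} [Countable I] [Nonempty I]
    {r : X → X → Prop} {u : I → X → ℝ} (hu : ∀ a b, r a b ↔ ∀ i, u i a ≤ u i b) (x : X) :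
    ∃ S : ℕ → Set X, S 0 = {z | ¬ r z x} ∧ (∀ n a b, r a b → a ∈ S n → b ∈ S n) ∧
      ∀ a b, ¬ r a b → ∃ n, a ∈ S n ∧ b ∉ S n := by
  obtain ⟨e, he⟩ := exists_surjective_nat (I × ℚ)
  refine ⟨fun n => Nat.casesOn n {z | ¬ r z x} fun m => {z | ((e m).2 : ℝ) < u (e m).1 z},
    rfl, ?_, ?_⟩
  · rintro (_ | m) a b hab ha
    · exact fun hbx => ha ((hu a x).2 fun i => ((hu a b).1 hab i).trans ((hu b x).1 hbx i))
    · exact ha.trans_le ((hu a b).1 hab _)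
  · intro a b hab
    obtain ⟨i, hi⟩ := not_forall.1 (mt (hu a b).2 hab)
    obtain ⟨q, hbq, hqa⟩ := exists_rat_btwn (not_le.1 hi)
    obtain ⟨m, hm⟩ := he (i, q)
    refine ⟨m + 1, ?_, ?_⟩
    · show ((e m).2 : ℝ) < u (e m).1 a
      rw [hm]; exact hqa
    · show ¬ ((e m).2 : ℝ) < u (e m).1 b
      rw [hm]; exact hbq.not_gt

theorem limitRel_eq_of_forall_ge {X : Type*} {R : ℕ → X → X → Prop} {r : X → X → Prop} (N : ℕ)
    (h : ∀ n ≥ N, R n = r) : LimitRel R = r := by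
  funext a b
  refine propext ⟨fun ⟨n₀, hn₀⟩ => ?_, fun hab => ⟨N, fun n hn => (h n hn).symm ▸ hab⟩⟩
  exact h (max n₀ N) (le_max_right _ _) ▸ hn₀ _ (le_max_left _ _)

theorem countable_multiUtility_limit_debreuSeparable_linearExtension {X : Type*}
    (r : X → X → Prop) (hr : IsPartialOrderRel r)
    (I : Type*) [Countable I] (u : I → X → ℝ)
    (hu : ∀ x y, r x y ↔ ∀ i, u i x ≤ u i y)
    (x y : X) (hxy : Incomp r x y) :
    ∃ S : ℕ → X → X → Prop,
      (∀ n, IsPartialOrderRel (S n)) ∧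
      S 0 = r ∧
      (∀ n, RelExtends (S n) (S (n + 1))) ∧
      IsLinearExtension r (LimitRel S) ∧
      DebreuSeparable (LimitRel S) ∧
      LimitRel S x y := by
  have : Nonempty I := by
    by_contra hI
    exact hxy.1 ((hu x y).2 fun i => (hI ⟨i⟩).elim)
  obtain ⟨S, hS0, hup, hsep⟩ := exists_separating_upperSet_seq hu x
  let v := cantorCode S
  have hmono : ∀ a b, r a b → v a ≤ v b := fun a b hab =>
    cantorCode_le_cantorCode fun n => hup n a b hab
  have hlin : IsLinearExtension r fun a b => v a ≤ v b :=
    isLinearExtension_comap (cantorCode_injective hr.2.1 hsep) hmono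
  have hvxy : v x < v y :=
    cantorCode_lt_cantorCode (n := 0) (by simp) (by simpa [hS0] using hr.1 x)
      (by simpa [hS0] using hxy.2)
  let R : ℕ → X → X → Prop := fun n => if n = 0 then r else fun a b => v a ≤ v b
  have hlim : LimitRel R = fun a b => v a ≤ v b :=
    limitRel_eq_of_forall_ge 1 fun n hn => if_neg (by omega)
  refine ⟨R, fun n => ?_, if_pos rfl, fun n => ?_, hlim ▸ hlin, hlim ▸ debreuSeparable_comap v,
    hlim ▸ hvxy.le⟩
  · rcases n with _ | n
    exacts [hr, hlin.1]
  · rcases n with _ | n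
    exacts [hmono, fun _ _ => id]
end

section
/- Let (X,≼) be a partial order and I a set. Then (X,≼) has a Debreu separable realizer (≼ᵢ)ᵢ∈I indexed by I if and only if it has an injective monotone multi-utility (uᵢ)ᵢ∈I indexed by I. -/
open Classical in
/-- Geometric-weighted sum of an indicator. -/
noncomputable def gsum (P : ℕ → Prop) : ℝ :=
  ∑' n, if P n then (1/2 : ℝ)^n else 0

open Classical in
lemma gsum_term_nonneg (P : ℕ → Prop) (n : ℕ) : 0 ≤ if P n then (1/2 : ℝ)^n else 0 := by
  split <;> positivity

open Classical in
lemma gsum_term_le (P Q : ℕ → Prop) (h : ∀ n, P n → Q n) (n : ℕ) :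
    (if P n then (1/2 : ℝ)^n else 0) ≤ (if Q n then (1/2 : ℝ)^n else 0) := by
  by_cases hp : P n
  · rw [if_pos hp, if_pos (h n hp)]
  · rw [if_neg hp]
    exact gsum_term_nonneg Q n

open Classical in
lemma gsum_summable (P : ℕ → Prop) : Summable (fun n => if P n then (1/2 : ℝ)^n else 0) := by
  refine Summable.of_nonneg_of_le (gsum_term_nonneg P) (fun n => ?_) summable_geometric_two
  by_cases hp : P n
  · rw [if_pos hp]
  · rw [if_neg hp]
    positivity

lemma gsum_mono {P Q : ℕ → Prop} (h : ∀ n, P n → Q n) : gsum P ≤ gsum Q :=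
  Summable.tsum_le_tsum (gsum_term_le P Q h) (gsum_summable P) (gsum_summable Q)

open Classical in
lemma gsum_lt {P Q : ℕ → Prop} (h : ∀ n, P n → Q n) {n : ℕ} (hQ : Q n) (hP : ¬ P n) :
    gsum P < gsum Q := by
  refine Summable.tsum_lt_tsum_of_nonneg (i := n) (gsum_term_nonneg P) (gsum_term_le P Q h) ?_ (gsum_summable Q)
  simp only [hP, hQ, if_true, if_false]
  positivity

/-- A total, Debreu separable partial order admits an injective utility representation. -/
lemma exists_injective_utility {X : Type*} (R : X → X → Prop) (hpo : IsPartialOrderRel R)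
    (htot : TotalRel R) (hsep : DebreuSeparable R) :
    ∃ u : X → ℝ, (∀ x y, R x y ↔ u x ≤ u y) ∧ Function.Injective u := by
  obtain ⟨hrefl, hanti, htrans⟩ := hpo
  obtain ⟨D, hDc, hDd⟩ := hsep
  by_cases hX : Nonempty X
  · obtain ⟨x₀⟩ := hX
    have hDc' : (insert x₀ D).Countable := hDc.insert x₀
    obtain ⟨d, hd⟩ := hDc'.exists_eq_range ⟨x₀, Set.mem_insert x₀ D⟩
    -- u x = gsum {n | d n ≼ x} + gsum {n | d n ≺ x}
    set u : X → ℝ := fun x =>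
      gsum (fun n => R (d n) x) + gsum (fun n => R (d n) x ∧ ¬ R x (d n)) with hu
    have mono : ∀ x y, R x y → u x ≤ u y := by
      intro x y hxy
      apply add_le_add
      · exact gsum_mono (fun n hn => htrans _ _ _ hn hxy)
      · refine gsum_mono (fun n hn => ⟨htrans _ _ _ hn.1 hxy, fun hyd => hn.2 (htrans _ _ _ hxy hyd)⟩)
    have strict : ∀ x y, R x y → ¬ R y x → u x < u y := by
      intro x y hxy hyx
      obtain ⟨e, heD, hxe, hey⟩ := hDd x y hxy hyx
      have : e ∈ Set.range d := by rw [← hd]; exact Set.mem_insert_of_mem _ heD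
      obtain ⟨n, rfl⟩ := this
      by_cases hdx : R (d n) x
      · -- then d n = x; strict in second component
        have hex : d n = x := hanti _ _ hdx hxe
        apply add_lt_add_of_le_of_lt
        · exact gsum_mono (fun m hm => htrans _ _ _ hm hxy)
        · refine gsum_lt (fun m hm => ⟨htrans _ _ _ hm.1 hxy,
            fun hyd => hm.2 (htrans _ _ _ hxy hyd)⟩) (n := n) ⟨hey, ?_⟩ ?_
          · intro hyd; exact hyx (hex ▸ hyd)
          · rw [hex]; intro hm; exact hm.2 (hrefl x)
      · -- strict in first component
        apply add_lt_add_of_lt_of_le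
        · exact gsum_lt (fun m hm => htrans _ _ _ hm hxy) (n := n) hey hdx
        · refine gsum_mono (fun m hm => ⟨htrans _ _ _ hm.1 hxy,
            fun hyd => hm.2 (htrans _ _ _ hxy hyd)⟩)
    refine ⟨u, fun x y => ⟨mono x y, ?_⟩, ?_⟩
    · intro hle
      by_contra hxy
      rcases htot x y with h | h
      · exact hxy h
      · exact absurd hle (not_le_of_gt (strict y x h hxy))
    · intro x y hxy
      by_contra hne
      rcases htot x y with h | h
      · have : ¬ R y x := fun h' => hne (hanti _ _ h h')
        exact absurd hxy (ne_of_lt (strict x y h this))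
      · have : ¬ R x y := fun h' => hne (hanti _ _ h' h)
        exact absurd hxy.symm (ne_of_lt (strict y x h this))
  · exact ⟨fun _ => 0, fun x _ => absurd ⟨x⟩ hX, fun x _ => absurd ⟨x⟩ hX⟩

open Classical in
/-- The order pulled back from `ℝ` along an injective map is Debreu separable. -/
lemma debreuSeparable_of_injective {X : Type*} (f : X → ℝ) (hf : Function.Injective f) :
    DebreuSeparable (fun x y => f x ≤ f y) := by
  -- dense part: pick witnesses between rational pairs
  let D₁ : Set X := ⋃ pq : ℚ × ℚ,
    if h : ∃ z, (pq.1 : ℝ) < f z ∧ f z < (pq.2 : ℝ) then {h.choose} else ∅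
  have hD₁c : D₁.Countable := by
    apply Set.countable_iUnion
    intro pq
    split
    · exact Set.countable_singleton _
    · exact Set.countable_empty
  -- jump part: left endpoints of jumps
  let L : Set X := {x | ∃ y, f x < f y ∧ ∀ z, ¬ (f x < f z ∧ f z < f y)}
  have hLc : L.Countable := by
    -- inject L into ℚ by choosing a rational inside the gap
    have key : ∀ x ∈ L, ∃ q : ℚ, ∃ y, (f x < q ∧ (q : ℝ) < f y) ∧
        ∀ z, ¬ (f x < f z ∧ f z < f y) := by
      intro x hx
      obtain ⟨y, hxy, hgap⟩ := hx
      obtain ⟨q, hq1, hq2⟩ := exists_rat_btwn hxy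
      exact ⟨q, y, ⟨hq1, hq2⟩, hgap⟩
    choose! q hq using key
    apply Set.countable_of_injective_of_countable_image (f := q) ?_ (Set.to_countable _)
    intro x hx x' hx' hqq
    obtain ⟨y, ⟨h1, h2⟩, hgap⟩ := hq x hx
    obtain ⟨y', ⟨h1', h2'⟩, hgap'⟩ := hq x' hx'
    rw [hqq] at h1 h2
    -- the rational q x' lies in both gaps; gap interiors contain no values
    have hle : f x' ≤ f x := by
      by_contra h
      push_neg at h
      rcases lt_or_ge (f x') (f y) with hy | hy
      · exact hgap x' ⟨h, hy⟩
      · exact absurd h2 (not_lt_of_gt (lt_of_le_of_lt hy h1'))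
    have hge : f x ≤ f x' := by
      by_contra h
      push_neg at h
      rcases lt_or_ge (f x) (f y') with hy | hy
      · exact hgap' x ⟨h, hy⟩
      · exact absurd h2' (not_lt_of_gt (lt_of_le_of_lt hy h1))
    exact hf (le_antisymm hge hle)
  refine ⟨D₁ ∪ L, hD₁c.union hLc, ?_⟩
  intro x y hxy hyx
  have hlt : f x < f y := lt_of_le_not_ge hxy hyx
  by_cases hz : ∃ z, f x < f z ∧ f z < f y
  · obtain ⟨z, hz1, hz2⟩ := hz
    obtain ⟨p, hp1, hp2⟩ := exists_rat_btwn hz1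
    obtain ⟨s, hs1, hs2⟩ := exists_rat_btwn hz2
    have hex : ∃ w, ((p, s).1 : ℝ) < f w ∧ f w < ((p, s).2 : ℝ) := ⟨z, hp2, hs1⟩
    set d := hex.choose with hd
    have hdp : (p : ℝ) < f d ∧ f d < (s : ℝ) := hex.choose_spec
    refine ⟨d, Or.inl ?_, le_of_lt (lt_trans hp1 hdp.1), le_of_lt (lt_trans hdp.2 hs2)⟩
    refine Set.mem_iUnion.2 ⟨(p, s), ?_⟩
    rw [dif_pos hex]
    rfl
  · push_neg at hz
    refine ⟨x, Or.inr ⟨y, hlt, fun z hc => (hz z hc.1).not_gt hc.2⟩, le_refl _, hxy⟩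

theorem debreuSeparableRealizer_iff_injectiveMonotoneMultiUtility {X : Type*}
    (r : X → X → Prop) (hr : IsPartialOrderRel r) (I : Type*) :
    (∃ R : I → X → X → Prop,
      (∀ i, IsLinearExtension r (R i) ∧ DebreuSeparable (R i)) ∧
      (∀ x y, r x y ↔ ∀ i, R i x y)) ↔
    (∃ u : I → X → ℝ,
      (∀ x y, r x y ↔ ∀ i, u i x ≤ u i y) ∧
      (∀ i, Function.Injective (u i)) ∧
      (∀ i x y, r x y → u i x ≤ u i y)) := by
  constructor
  · rintro ⟨R, hR, hiff⟩
    have h : ∀ i, ∃ u : X → ℝ, (∀ x y, R i x y ↔ u x ≤ u y) ∧ Function.Injective u := by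
      intro i
      obtain ⟨⟨hpo, htot, _⟩, hsep⟩ := hR i
      exact exists_injective_utility (R i) hpo htot hsep
    choose u hu hinj using h
    refine ⟨u, ?_, hinj, ?_⟩
    · intro x y
      rw [hiff x y]
      exact forall_congr' (fun i => hu i x y)
    · intro i x y hxy
      exact (hu i x y).1 ((hiff x y).1 hxy i)
  · rintro ⟨u, hiff, hinj, hmono⟩
    refine ⟨fun i x y => u i x ≤ u i y, fun i => ⟨⟨⟨fun x => le_refl _,
      fun x y h1 h2 => hinj i (le_antisymm h1 h2),
      fun x y z h1 h2 => le_trans h1 h2⟩,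
      fun x y => le_total _ _, fun x y h => hmono i x y h⟩,
      debreuSeparable_of_injective (u i) (hinj i)⟩, hiff⟩
end

section
/- Let (X,≼) be a partial order admitting an injective monotone, let A ⊆ X be an antichain of ≼, and let ≼_A be a Debreu separable total order on A. Then there exists a Debreu separable total order ≼'' on X such that x ≼ y implies x ≼'' y for all x, y ∈ X, and a ≼_A b implies a ≼'' b for all a, b ∈ A. -/
/-!
Let `≤'` (`ViaAntichain r A rA`) be the relation generated by `≼` and `≼_A`: `x ≤' y` iff
`x ≼ y` or `x ≼ a ≼_A b ≼ y` for some `a, b ∈ A`; it is transitive because `A` is an antichain.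
Take the `≤'`-up-closures, and the complements of the `≤'`-down-closures, of the sets
(`generators`) `{u > q}`, `{u < q}` (`q ∈ ℚ`), `A`, and the rays `{a | d ≼_A a}`, `{a | d ≺_A a}`
(`d` in a countable Debreu dense `D ⊆ A`). These countably many `≤'`-increasing sets separate
points: the rational sets force two inseparable points into `A`, where the rays separate them.
Coding membership in these sets as the ternary digits of a real number gives an injective
monotone `f` for `≤'`, and `f x ≤ f y` is the required total order, Debreu separable since it is
pulled back from `ℝ`.
-/

open Set Topology

section ComapLinearOrder

variable {α : Type*} [LinearOrder α] [TopologicalSpace α] [OrderTopology α]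
  [SecondCountableTopology α]

theorem exists_countable_subset_forall_lt_exists_between (S : Set α) :
    ∃ T ⊆ S, T.Countable ∧ ∀ x ∈ S, ∀ y ∈ S, x < y → ∃ d ∈ T, x ≤ d ∧ d ≤ y := by
  obtain ⟨C, hCc, hCd⟩ := TopologicalSpace.exists_countable_dense S
  refine ⟨(↑) '' C ∪ {x ∈ S | 𝓝[S ∩ Ioi x] x = ⊥}, union_subset (by simp) (sep_subset _ _),
    (hCc.image _).union countable_setOfPred_isolated_right_within, ?_⟩
  intro x hx y hy hxy
  by_cases hgap : (S ∩ Ioo x y).Nonempty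
  · obtain ⟨z, hzS, hz⟩ := hgap
    obtain ⟨d, hdC, hd⟩ := hCd.exists_mem_open (isOpen_Ioo.preimage continuous_subtype_val)
      ⟨⟨z, hzS⟩, hz⟩
    exact ⟨d, Or.inl ⟨d, hdC, rfl⟩, hd.1.le, hd.2.le⟩
  · refine ⟨x, Or.inr ⟨hx, ?_⟩, le_rfl, hxy.le⟩
    rw [← Filter.empty_mem_iff_bot, mem_nhdsWithin_iff_exists_mem_nhds_inter]
    exact ⟨Iio y, Iio_mem_nhds hxy, fun z ⟨hzy, hzS, hxz⟩ => hgap ⟨z, hzS, hxz, hzy⟩⟩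

theorem debreuSeparable_comap_le {X : Type*} (f : X → α) :
    DebreuSeparable (fun x y => f x ≤ f y) := by
  obtain ⟨T, hTS, hTc, hT⟩ := exists_countable_subset_forall_lt_exists_between (range f)
  have : Countable T := hTc.to_subtype
  choose g hg using fun t : T => hTS t.2
  refine ⟨range g, countable_range g, fun x y hxy hyx => ?_⟩
  obtain ⟨d, hdT, hxd, hdy⟩ := hT _ (mem_range_self x) _ (mem_range_self y) (not_le.1 hyx)
  exact ⟨g ⟨d, hdT⟩, mem_range_self _, hxd.trans_eq (hg ⟨d, hdT⟩).symm,
    (hg ⟨d, hdT⟩).trans_le hdy⟩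

end ComapLinearOrder

theorem isPartialOrderRel_comap_le {X α : Type*} [PartialOrder α] {f : X → α}
    (hf : Function.Injective f) : IsPartialOrderRel (fun x y => f x ≤ f y) :=
  ⟨fun _ => le_rfl, fun _ _ h₁ h₂ => hf (le_antisymm h₁ h₂), fun _ _ _ => le_trans⟩

section SeparatingFamily

variable {X : Type*}

theorem exists_injective_monotone_of_separating (R : X → X → Prop) (𝒮 : Set (Set X))
    (h𝒮 : 𝒮.Countable) (hup : ∀ S ∈ 𝒮, ∀ x y, R x y → x ∈ S → y ∈ S)
    (hsep : ∀ x y, (∀ S ∈ 𝒮, x ∈ S ↔ y ∈ S) → x = y) :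
    ∃ f : X → ℝ, (∀ x y, R x y → f x ≤ f y) ∧ Function.Injective f := by
  classical
  obtain ⟨s, hs⟩ := countable_iff_exists_subset_range.1 h𝒮
  let bits (x : X) (n : ℕ) : Bool := decide (s n ∈ 𝒮 ∧ x ∈ s n)
  refine ⟨fun x => Cardinal.cantorFunction (1 / 3) (bits x), fun x y hxy => ?_, ?_⟩
  · refine Cardinal.cantorFunction_le (by norm_num) (by norm_num) fun n hn => ?_
    simp only [bits, decide_eq_true_eq] at hn ⊢
    exact ⟨hn.1, hup _ hn.1 x y hxy hn.2⟩
  · intro x y hxy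
    refine hsep x y fun S hS => ?_
    obtain ⟨n, rfl⟩ := hs hS
    simpa [bits, hS] using
      congrFun (Cardinal.cantorFunction_injective (by norm_num) (by norm_num) hxy) n

def upClosure (R : X → X → Prop) (T : Set X) : Set X := {y | ∃ x ∈ T, R x y}

def downClosure (R : X → X → Prop) (T : Set X) : Set X := {x | ∃ y ∈ T, R x y}

theorem exists_injective_monotone_of_separating_closures {R : X → X → Prop}
    (hR : ∀ x y z, R x y → R y z → R x z) {𝒯 : Set (Set X)} (h𝒯 : 𝒯.Countable)
    (hsep : ∀ x y, (∀ T ∈ 𝒯, (x ∈ upClosure R T ↔ y ∈ upClosure R T) ∧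
      (x ∈ downClosure R T ↔ y ∈ downClosure R T)) → x = y) :
    ∃ f : X → ℝ, (∀ x y, R x y → f x ≤ f y) ∧ Function.Injective f := by
  refine exists_injective_monotone_of_separating R
    (upClosure R '' 𝒯 ∪ (fun T => (downClosure R T)ᶜ) '' 𝒯)
    ((h𝒯.image _).union (h𝒯.image _)) ?_ fun x y h => hsep x y fun T hT => ⟨?_, ?_⟩
  · rintro _ (⟨T, -, rfl⟩ | ⟨T, -, rfl⟩) x y hxy
    · exact fun ⟨z, hzT, hzx⟩ => ⟨z, hzT, hR _ _ _ hzx hxy⟩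
    · exact fun hx ⟨z, hzT, hyz⟩ => hx ⟨z, hzT, hR _ _ _ hxy hyz⟩
  · exact h _ (Or.inl ⟨T, hT, rfl⟩)
  · exact not_iff_not.1 (h _ (Or.inr ⟨T, hT, rfl⟩))

end SeparatingFamily

theorem eq_of_forall_debreuDense_iff {Y : Type*} {s : Y → Y → Prop} (hs : IsPartialOrderRel s)
    (htot : TotalRel s) {D : Set Y} (hD : DebreuDense s D) {a b : Y}
    (h : ∀ d ∈ D, (s d a ↔ s d b) ∧ (s d a ∧ ¬ s a d ↔ s d b ∧ ¬ s b d)) : a = b := by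
  wlog hab : s a b generalizing a b
  · have hba := (htot a b).resolve_left hab
    exact (this (fun d hd => ⟨(h d hd).1.symm, (h d hd).2.symm⟩) hba).symm
  by_contra hne
  have hba : ¬ s b a := fun hba => hne (hs.2.1 _ _ hab hba)
  obtain ⟨d, hd, had, hdb⟩ := hD a b hab hba
  by_cases hda : s d a
  · exact ((h d hd).2.2 ⟨hdb, fun hbd => hba (hs.2.2 _ _ _ hbd hda)⟩).2 had
  · exact hda ((h d hd).1.2 hdb)

namespace AntichainExtension

variable {X : Type*} {r : X → X → Prop} {A : Set X} {rA : A → A → Prop}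

def ViaAntichain (r : X → X → Prop) (A : Set X) (rA : A → A → Prop) (x y : X) : Prop :=
  r x y ∨ ∃ a b : A, rA a b ∧ r x a ∧ r b y

theorem eq_of_rel (hA : ∀ x ∈ A, ∀ y ∈ A, x ≠ y → Incomp r x y) {a b : A} (h : r a b) :
    a = b :=
  Subtype.ext (by_contra fun hab => (hA a a.2 b b.2 hab).1 h)

namespace ViaAntichain

theorem of_rel {x y : X} (h : r x y) : ViaAntichain r A rA x y := Or.inl h

theorem of_rA (hr : IsPartialOrderRel r) {a b : A} (h : rA a b) : ViaAntichain r A rA a b :=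
  Or.inr ⟨a, b, h, hr.1 _, hr.1 _⟩

theorem trans (hr : IsPartialOrderRel r) (hA : ∀ x ∈ A, ∀ y ∈ A, x ≠ y → Incomp r x y)
    (hrA : IsPartialOrderRel rA) (x y z : X) :
    ViaAntichain r A rA x y → ViaAntichain r A rA y z → ViaAntichain r A rA x z := by
  rintro (hxy | ⟨a, b, hab, hxa, hby⟩) (hyz | ⟨c, d, hcd, hyc, hdz⟩)
  · exact .of_rel (hr.2.2 _ _ _ hxy hyz)
  · exact Or.inr ⟨c, d, hcd, hr.2.2 _ _ _ hxy hyc, hdz⟩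
  · exact Or.inr ⟨a, b, hab, hxa, hr.2.2 _ _ _ hby hyz⟩
  · obtain rfl := eq_of_rel hA (hr.2.2 _ _ _ hby hyc)
    exact Or.inr ⟨a, d, hrA.2.2 _ _ _ hab hcd, hxa, hdz⟩

end ViaAntichain

local notation "V" => ViaAntichain r A rA

theorem exists_rel_of_mem_upClosure {x : X} (hx : x ∈ upClosure V A) : ∃ b : A, r b x := by
  obtain ⟨a, ha, hax | ⟨-, b, -, -, hbx⟩⟩ := hx
  exacts [⟨⟨a, ha⟩, hax⟩, ⟨b, hbx⟩]

theorem exists_rel_of_mem_downClosure {x : X} (hx : x ∈ downClosure V A) : ∃ c : A, r x c := by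
  obtain ⟨a, ha, hxa | ⟨c, -, -, hxc, -⟩⟩ := hx
  exacts [⟨⟨a, ha⟩, hxa⟩, ⟨c, hxc⟩]

theorem mem_of_mem_upClosure_of_mem_downClosure (hr : IsPartialOrderRel r)
    (hA : ∀ x ∈ A, ∀ y ∈ A, x ≠ y → Incomp r x y) {x : X} (hup : x ∈ upClosure V A)
    (hdown : x ∈ downClosure V A) : x ∈ A := by
  obtain ⟨b, hbx⟩ := exists_rel_of_mem_upClosure hup
  obtain ⟨c, hxc⟩ := exists_rel_of_mem_downClosure hdown
  obtain rfl := eq_of_rel hA (hr.2.2 _ _ _ hbx hxc)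
  exact hr.2.1 _ _ hxc hbx ▸ b.2

theorem mem_upClosure_of_notMem_upClosure_rel {T : Set X} {x : X} (hx : x ∈ upClosure V T)
    (hxT : x ∉ upClosure r T) : x ∈ upClosure V A := by
  obtain ⟨z, hz, hzx | ⟨-, b, -, -, hbx⟩⟩ := hx
  exacts [absurd ⟨z, hz, hzx⟩ hxT, ⟨b, b.2, .of_rel hbx⟩]

theorem mem_downClosure_of_notMem_downClosure_rel {T : Set X} {x : X}
    (hx : x ∈ downClosure V T) (hxT : x ∉ downClosure r T) : x ∈ downClosure V A := by
  obtain ⟨z, hz, hxz | ⟨a, -, -, hxa, -⟩⟩ := hx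
  exacts [absurd ⟨z, hz, hxz⟩ hxT, ⟨a, a.2, .of_rel hxa⟩]

theorem coe_mem_upClosure_image_iff (hr : IsPartialOrderRel r)
    (hA : ∀ x ∈ A, ∀ y ∈ A, x ≠ y → Incomp r x y) {U : Set A}
    (hU : ∀ a b, rA a b → a ∈ U → b ∈ U) (a : A) :
    (a : X) ∈ upClosure V ((↑) '' U) ↔ a ∈ U := by
  refine ⟨?_, fun ha => ⟨a, ⟨a, ha, rfl⟩, .of_rel (hr.1 a)⟩⟩
  rintro ⟨_, ⟨c, hc, rfl⟩, hca | ⟨c', b, hc'b, hcc', hba⟩⟩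
  · rwa [← eq_of_rel hA hca]
  · obtain rfl := eq_of_rel hA hcc'
    obtain rfl := eq_of_rel hA hba
    exact hU _ _ hc'b hc

def generators (A : Set X) (rA : A → A → Prop) (u : X → ℝ) (D : Set A) : Set (Set X) :=
  insert A (range (fun q : ℚ => u ⁻¹' Ioi (q : ℝ)) ∪ range (fun q : ℚ => u ⁻¹' Iio (q : ℝ)) ∪
    (fun d => (↑) '' {c | rA d c}) '' D ∪ (fun d => (↑) '' {c | rA d c ∧ ¬ rA c d}) '' D)

theorem countable_generators (u : X → ℝ) {D : Set A} (hD : D.Countable) :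
    (generators A rA u D).Countable :=
  (((countable_range _).union (countable_range _)).union (hD.image _) |>.union
    (hD.image _)).insert A

theorem eq_of_forall_mem_closures_iff (hr : IsPartialOrderRel r) {u : X → ℝ}
    (hu : ∀ x y, r x y → u x ≤ u y) (huinj : Function.Injective u)
    (hA : ∀ x ∈ A, ∀ y ∈ A, x ≠ y → Incomp r x y) (hrA : IsPartialOrderRel rA)
    (hrAtot : TotalRel rA) {D : Set A} (hD : DebreuDense rA D) {x y : X}
    (h : ∀ T ∈ generators A rA u D,
      (x ∈ upClosure V T ↔ y ∈ upClosure V T) ∧ (x ∈ downClosure V T ↔ y ∈ downClosure V T)) :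
    x = y := by
  wlog hxy : u x < u y generalizing x y
  · obtain heq | hlt := (not_lt.1 hxy).eq_or_lt
    exacts [(huinj heq).symm, (this (fun T hT => ⟨(h T hT).1.symm, (h T hT).2.symm⟩) hlt).symm]
  obtain ⟨q, hxq, hqy⟩ := exists_rat_btwn hxy
  have hx : x ∈ upClosure V A :=
    mem_upClosure_of_notMem_upClosure_rel
      ((h _ (mem_insert_of_mem _ <| .inl <| .inl <| .inl ⟨q, rfl⟩)).1.2 ⟨y, hqy, .of_rel (hr.1 y)⟩)
      fun ⟨z, hz, hzx⟩ => lt_irrefl _ ((hxq.trans hz).trans_le (hu _ _ hzx))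
  have hy : y ∈ downClosure V A :=
    mem_downClosure_of_notMem_downClosure_rel
      ((h _ (mem_insert_of_mem _ <| .inl <| .inl <| .inr ⟨q, rfl⟩)).2.1 ⟨x, hxq, .of_rel (hr.1 x)⟩)
      fun ⟨z, hz, hyz⟩ => lt_irrefl _ ((hz.trans hqy).trans_le (hu _ _ hyz))
  lift x to A using mem_of_mem_upClosure_of_mem_downClosure hr hA hx ((h A (mem_insert _ _)).2.2 hy)
  lift y to A using mem_of_mem_upClosure_of_mem_downClosure hr hA ((h A (mem_insert _ _)).1.1 hx) hy
  have key (U : Set A) (hU : ∀ a b, rA a b → a ∈ U → b ∈ U) (hUT : (↑) '' U ∈ generators A rA u D) :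
      x ∈ U ↔ y ∈ U := by
    rw [← coe_mem_upClosure_image_iff hr hA hU, ← coe_mem_upClosure_image_iff hr hA hU]
    exact (h _ hUT).1
  refine congrArg _ (eq_of_forall_debreuDense_iff hrA hrAtot hD fun d hd => ⟨?_, ?_⟩)
  · exact key {c | rA d c} (fun a b hab hda => hrA.2.2 _ _ _ hda hab)
      (mem_insert_of_mem _ <| .inl <| .inr ⟨d, hd, rfl⟩)
  · exact key {c | rA d c ∧ ¬ rA c d}
      (fun a b hab ⟨hda, had⟩ => ⟨hrA.2.2 _ _ _ hda hab, fun hbd => had (hrA.2.2 _ _ _ hab hbd)⟩)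
      (mem_insert_of_mem _ <| .inr ⟨d, hd, rfl⟩)

end AntichainExtension

open AntichainExtension in
theorem antichain_extension_debreuSeparable {X : Type*}
    (r : X → X → Prop) (hr : IsPartialOrderRel r)
    (hinj : ∃ u : X → ℝ, (∀ x y, r x y → u x ≤ u y) ∧ Function.Injective u)
    (A : Set X) (hA : ∀ x ∈ A, ∀ y ∈ A, x ≠ y → Incomp r x y)
    (rA : A → A → Prop) (hrA : IsPartialOrderRel rA) (hrAtot : TotalRel rA)
    (hrAsep : DebreuSeparable rA) :
    ∃ r'' : X → X → Prop,
      IsPartialOrderRel r'' ∧ TotalRel r'' ∧ DebreuSeparable r'' ∧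
      (∀ x y, r x y → r'' x y) ∧
      (∀ a b : A, rA a b → r'' (a : X) (b : X)) := by
  obtain ⟨u, hu, huinj⟩ := hinj
  obtain ⟨D, hDc, hD⟩ := hrAsep
  obtain ⟨f, hf, hfinj⟩ := exists_injective_monotone_of_separating_closures
    (ViaAntichain.trans hr hA hrA) (countable_generators u hDc)
    fun x y h => eq_of_forall_mem_closures_iff hr hu huinj hA hrA hrAtot hD h
  exact ⟨fun x y => f x ≤ f y, isPartialOrderRel_comap_le hfinj, fun x y => le_total _ _,
    debreuSeparable_comap_le f, fun x y h => hf _ _ (.of_rel h),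
    fun a b h => hf _ _ (.of_rA hr h)⟩
end

section
/- If a partial order (X,≼) has a countable multi-utility, then it has a countable injective monotone multi-utility, i.e., a countable multi-utility every member of which is an injective monotone. -/
/-!
The bits `[q < uᵢ x]` (`i ∈ I`, `q ∈ ℚ`) are countably many monotone 0/1 functions, and `x ≼ y`
iff every bit of `x` is at most the corresponding bit of `y`; by antisymmetry the bit sequence
determines `x`. Read in base 3 (the Cantor function), bit sequences map injectively and
monotonically to reals. Reading the sequence with its `n`-th bit written in front gives an
injective monotone `vₙ` which, as the Cantor function is lexicographically increasing, also
detects whether the `n`-th bit of `x` exceeds that of `y`; hence the `vₙ` form a multi-utility.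
-/

open Cardinal Function

theorem le_iff_forall_rat_lt_imp_lt {K : Type*} [Field K] [LinearOrder K] [IsStrictOrderedRing K]
    [Archimedean K] {x y : K} : x ≤ y ↔ ∀ q : ℚ, (q : K) < x → (q : K) < y :=
  ⟨fun hxy _ hqx ↦ hqx.trans_le hxy, fun h ↦ le_of_forall_rat_lt_imp_le fun q hq ↦ (h q hq).le⟩

theorem Function.Injective.extend_le_extend_iff {α β γ : Type*} [Preorder γ] {e : α → β}
    (he : Injective e) {f g : α → γ} {h : β → γ} : extend e f h ≤ extend e g h ↔ f ≤ g := by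
  refine ⟨fun hfg a ↦ ?_, fun hfg b ↦ ?_⟩
  · simpa only [he.extend_apply] using hfg (e a)
  · by_cases hb : ∃ a, e a = b
    · obtain ⟨a, rfl⟩ := hb
      simpa only [he.extend_apply] using hfg a
    · simp only [extend_apply' _ _ _ hb, le_refl]

noncomputable def cantorWithLead (a : ℕ → Bool) (n : ℕ) : ℝ :=
  cantorFunction (1 / 3) (Stream'.cons (a n) a)

section cantorWithLead

variable {a b : ℕ → Bool}

theorem cantorWithLead_mono (hab : a ≤ b) (n : ℕ) : cantorWithLead a n ≤ cantorWithLead b n := by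
  refine cantorFunction_le (by norm_num) (by norm_num) fun k ↦ ?_
  rw [← Bool.le_iff_imp]
  cases k with
  | zero => exact hab n
  | succ k => exact hab k

theorem cantorWithLead_injective (n : ℕ) : Injective fun a ↦ cantorWithLead a n := by
  intro a b hab
  have hcons := cantorFunction_injective (by norm_num) (by norm_num) hab
  exact funext fun k ↦ congrFun hcons (k + 1)

theorem le_of_forall_cantorWithLead_le (h : ∀ n, cantorWithLead a n ≤ cantorWithLead b n) :
    a ≤ b := by
  intro n
  by_contra hlt
  obtain ⟨ha, hb⟩ : a n = true ∧ b n = false := by simpa [Bool.le_iff_imp] using hlt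
  exact (h n).not_gt <| increasing_cantorFunction (n := 0) (by norm_num) (by norm_num)
    (fun _ hk ↦ absurd hk (Nat.not_lt_zero _)) hb ha

end cantorWithLead

theorem exists_bool_seq_of_countable_multiUtility {X I : Type*} [Countable I] (r : X → X → Prop)
    (u : I → X → ℝ) (hu : ∀ x y, r x y ↔ ∀ i, u i x ≤ u i y) :
    ∃ a : X → ℕ → Bool, ∀ x y, r x y ↔ a x ≤ a y := by
  obtain ⟨e, he⟩ := exists_injective_nat (I × ℚ)
  let bits (x : X) (p : I × ℚ) : Bool := decide ((p.2 : ℝ) < u p.1 x)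
  refine ⟨fun x ↦ extend e (bits x) ⊥, fun x y ↦ ?_⟩
  simp only [he.extend_le_extend_iff, hu, le_iff_forall_rat_lt_imp_lt (K := ℝ), Pi.le_def,
    Bool.le_iff_imp, decide_eq_true_eq, bits, Prod.forall]

theorem countable_multiUtility_to_injectiveMonotoneMultiUtility {X : Type*}
    (r : X → X → Prop) (hr : IsPartialOrderRel r)
    (I : Type*) [Countable I] (u : I → X → ℝ)
    (hu : ∀ x y, r x y ↔ ∀ i, u i x ≤ u i y) :
    ∃ (J : Type) (v : J → X → ℝ), Countable J ∧
      (∀ x y, r x y ↔ ∀ j, v j x ≤ v j y) ∧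
      (∀ j, Function.Injective (v j)) ∧
      (∀ j x y, r x y → v j x ≤ v j y) := by
  obtain ⟨a, ha⟩ := exists_bool_seq_of_countable_multiUtility r u hu
  have hmulti : ∀ x y, r x y ↔ ∀ n, cantorWithLead (a x) n ≤ cantorWithLead (a y) n :=
    fun x y ↦ (ha x y).trans
      ⟨fun hxy ↦ cantorWithLead_mono hxy, le_of_forall_cantorWithLead_le⟩
  have ha_inj : Injective a := fun x y hxy ↦
    hr.2.1 x y ((ha x y).2 hxy.le) ((ha y x).2 hxy.ge)
  refine ⟨ℕ, fun n x ↦ cantorWithLead (a x) n, inferInstance, hmulti,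
    fun n ↦ (cantorWithLead_injective n).comp ha_inj, fun n x y hxy ↦ (hmulti x y).1 hxy n⟩
end

section
/- If a partial order (X,≼) has a finite multi-utility (uᵢ)ᵢ₌₁,…,N, then it has a realizer (≼ᵢ)ᵢ₌₁,…,N consisting of N linear extensions. In particular, any partial order with finite geometrical dimension has finite Dushnik–Miller dimension. -/
/-!
Fix one linear extension `L` of `≼` (Szpilrajn). For each utility `uᵢ`, order `X` lexicographically:
first by `uᵢ`, ties broken by `L`. Each such order is a linear extension of `≼`, since `x ≼ y` forces
`uᵢ x ≤ uᵢ y` and, on a tie, `L x y`. Conversely, if `x` precedes `y` in all of them, then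
`uᵢ x ≤ uᵢ y` for every `i`, which is `x ≼ y` by the multi-utility property.
-/

theorem IsPartialOrderRel.exists_isLinearExtension {X : Type*} {r : X → X → Prop}
    (hr : IsPartialOrderRel r) : ∃ L, IsLinearExtension r L := by
  obtain ⟨hrefl, hanti, htrans⟩ := hr
  have : IsPartialOrder X r := { refl := hrefl, trans := htrans, antisymm := hanti }
  obtain ⟨L, hL, hrL⟩ := extend_partialOrder r
  exact ⟨L, ⟨refl_of L, fun _ _ => antisymm_of L, fun _ _ _ => trans_of L⟩, total_of L, hrL⟩

def lexRel {X α : Type*} [LinearOrder α] (f : X → α) (L : X → X → Prop) : X → X → Prop :=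
  fun x y => f x < f y ∨ (f x = f y ∧ L x y)

section LexRel

variable {X α : Type*} [LinearOrder α] {f : X → α} {L : X → X → Prop}

theorem le_of_lexRel {x y : X} : lexRel f L x y → f x ≤ f y
  | .inl h => h.le
  | .inr h => h.1.le

theorem lexRel_of_le {x y : X} (hf : f x ≤ f y) (hL : L x y) : lexRel f L x y :=
  hf.lt_or_eq.imp_right fun h => ⟨h, hL⟩

theorem isPartialOrderRel_lexRel (hL : IsPartialOrderRel L) : IsPartialOrderRel (lexRel f L) := by
  obtain ⟨hrefl, hanti, htrans⟩ := hL
  refine ⟨fun x => .inr ⟨rfl, hrefl x⟩, ?_, ?_⟩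
  · rintro x y (hxy | ⟨hfxy, hxy⟩) hyx
    · exact absurd hxy (le_of_lexRel hyx).not_gt
    · rcases hyx with hyx | ⟨-, hyx⟩
      · exact absurd hyx hfxy.le.not_gt
      · exact hanti x y hxy hyx
  · rintro x y z (hxy | ⟨hxy, hLxy⟩) (hyz | ⟨hyz, hLyz⟩)
    · exact .inl (hxy.trans hyz)
    · exact .inl (hyz ▸ hxy)
    · exact .inl (hxy ▸ hyz)
    · exact .inr ⟨hxy.trans hyz, htrans x y z hLxy hLyz⟩

theorem totalRel_lexRel (hL : TotalRel L) : TotalRel (lexRel f L) := by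
  intro x y
  rcases lt_trichotomy (f x) (f y) with h | h | h
  · exact .inl (.inl h)
  · exact (hL x y).imp (fun hL => .inr ⟨h, hL⟩) fun hL => .inr ⟨h.symm, hL⟩
  · exact .inr (.inl h)

theorem isLinearExtension_lexRel {r : X → X → Prop} (hL : IsLinearExtension r L)
    (hf : ∀ x y, r x y → f x ≤ f y) : IsLinearExtension r (lexRel f L) :=
  ⟨isPartialOrderRel_lexRel hL.1, totalRel_lexRel hL.2.1,
    fun x y hxy => lexRel_of_le (hf x y hxy) (hL.2.2 x y hxy)⟩

end LexRel

theorem finite_multiUtility_to_finite_realizer {X : Type*}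
    (r : X → X → Prop) (hr : IsPartialOrderRel r)
    (N : ℕ) (u : Fin N → X → ℝ)
    (hu : ∀ x y, r x y ↔ ∀ i, u i x ≤ u i y) :
    ∃ R : Fin N → X → X → Prop,
      (∀ i, IsLinearExtension r (R i)) ∧
      (∀ x y, r x y ↔ ∀ i, R i x y) := by
  obtain ⟨L, hL⟩ := hr.exists_isLinearExtension
  have hR : ∀ i, IsLinearExtension r (lexRel (u i) L) := fun i =>
    isLinearExtension_lexRel hL fun x y hxy => (hu x y).1 hxy i
  exact ⟨fun i => lexRel (u i) L, hR, fun x y =>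
    ⟨fun hxy i => (hR i).2.2 x y hxy, fun h => (hu x y).2 fun i => le_of_lexRel (h i)⟩⟩
end

section
/- Let X = ℝ \ {0}, and define x ≼ y iff |x| ≤ |y| and sgn(x) ≤ sgn(y), where sgn(x) = 1 if x > 0 and sgn(x) = −1 if x < 0. Then ≼ is a partial order on X, the pair of functions (|·|, sgn) is a multi-utility for (X,≼) of cardinality 2, and (X,≼) has no finite Debreu separable realizer: for every natural number N and every family (≼ᵢ)ᵢ₌₁,…,N of Debreu separable linear extensions of ≼, there exist x, y ∈ X with ¬(x ≼ y) but x ≼ᵢ y for all i = 1,…,N. -/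
/-- Absolute value on `ℝ \ {0}`. -/
def absFn : NzReal → ℝ := fun x => |x.1|

/-- Sign function: `1` on positives, `-1` on negatives. -/
noncomputable def sgnFn : NzReal → ℝ := fun x => if 0 < x.1 then 1 else -1

/-- The partial order of Theorem 4: `x ≼ y` iff `|x| ≤ |y|` and `sgn x ≤ sgn y`. -/
noncomputable def rGeo : NzReal → NzReal → Prop := fun x y =>
  absFn x ≤ absFn y ∧ sgnFn x ≤ sgnFn y

/-!
Each pair `-eᵗ ≺ eᵗ` is strict in every linear extension, so a Debreu dense set of the `i`-th
extension contains a point `dᵢ(t)` between them. The map `t ↦ (dᵢ(t))ᵢ` sends the uncountable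
set `ℝ` into a finite product of countable sets, so two parameters `s < u` share the same points;
then `-eᵘ ≼ᵢ dᵢ(u) = dᵢ(s) ≼ᵢ eˢ` for every `i`, although `-eᵘ ⋠ eˢ` since `eˢ < eᵘ`.
-/

lemma sgnFn_mul_absFn (x : NzReal) : sgnFn x * absFn x = x.1 := by
  unfold sgnFn absFn
  split_ifs with hpos
  · rw [abs_of_pos hpos, one_mul]
  · rw [abs_of_neg (lt_of_le_of_ne (not_lt.1 hpos) x.2), neg_one_mul, neg_neg]

lemma rGeo_isPartialOrderRel : IsPartialOrderRel rGeo := by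
  refine ⟨fun x => ⟨le_rfl, le_rfl⟩, fun x y hxy hyx => ?_,
    fun x y z hxy hyz => ⟨hxy.1.trans hyz.1, hxy.2.trans hyz.2⟩⟩
  apply Subtype.ext
  rw [← sgnFn_mul_absFn x, ← sgnFn_mul_absFn y, le_antisymm hxy.1 hyx.1, le_antisymm hxy.2 hyx.2]

lemma IsLinearExtension.not_rel_of_rel_of_ne {X : Type*} {r R : X → X → Prop}
    (hR : IsLinearExtension r R) {x y : X} (hxy : r x y) (hne : x ≠ y) : ¬ R y x :=
  fun hyx => hne (hR.1.2.1 x y (hR.2.2 x y hxy) hyx)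

theorem exists_ne_forall_rel_of_debreuSeparable {ι X T : Type*} [Finite ι] [Uncountable T]
    {R : ι → X → X → Prop} (hsep : ∀ i, DebreuSeparable (R i))
    (htrans : ∀ i x y z, R i x y → R i y z → R i x z) {a b : T → X}
    (hab : ∀ i t, R i (a t) (b t)) (hba : ∀ i t, ¬ R i (b t) (a t)) :
    ∃ s u, s ≠ u ∧ ∀ i, R i (a s) (b u) ∧ R i (a u) (b s) := by
  choose D hD_countable hD_dense using hsep
  choose d hdD had hdb using fun t i => hD_dense i _ _ (hab i t) (hba i t)
  have : Countable {g : ι → X | ∀ i, g i ∈ D i} := (Set.countable_pi hD_countable).to_subtype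
  obtain ⟨s, u, hsu, hne⟩ := Function.not_injective_iff.1 <|
    not_injective_uncountable_countable
      fun t => (⟨d t, hdD t⟩ : {g : ι → X | ∀ i, g i ∈ D i})
  have hd : d s = d u := congrArg Subtype.val hsu
  refine ⟨s, u, hne, fun i => ⟨?_, ?_⟩⟩
  · exact htrans i _ _ _ (had s i) (hd ▸ hdb u i)
  · exact htrans i _ _ _ (had u i) (hd ▸ hdb s i)

noncomputable def expNz (t : ℝ) : NzReal := ⟨Real.exp t, (Real.exp_pos t).ne'⟩

noncomputable def negExpNz (t : ℝ) : NzReal := ⟨-Real.exp t, neg_ne_zero.2 (Real.exp_pos t).ne'⟩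

lemma absFn_expNz (t : ℝ) : absFn (expNz t) = Real.exp t :=
  abs_of_pos (Real.exp_pos t)

lemma absFn_negExpNz (t : ℝ) : absFn (negExpNz t) = Real.exp t := by
  rw [absFn, negExpNz, abs_neg, abs_of_pos (Real.exp_pos t)]

lemma negExpNz_ne_expNz (t : ℝ) : negExpNz t ≠ expNz t := fun h =>
  (Real.exp_pos t).ne' (neg_eq_self.1 (congrArg Subtype.val h))

lemma rGeo_negExpNz_expNz (t : ℝ) : rGeo (negExpNz t) (expNz t) := by
  refine ⟨(absFn_negExpNz t).trans_le (absFn_expNz t).ge, ?_⟩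
  simp only [sgnFn, expNz, Real.exp_pos, if_true]
  split_ifs <;> norm_num

lemma not_rGeo_negExpNz_expNz_of_lt {s u : ℝ} (hsu : s < u) : ¬ rGeo (negExpNz u) (expNz s) :=
  fun h => (Real.exp_lt_exp.2 hsu).not_ge <| by
    simpa only [absFn_negExpNz, absFn_expNz] using h.1

theorem rGeo_multiUtility_two_no_finite_debreuSeparableRealizer :
    IsPartialOrderRel rGeo ∧
    (∀ x y, rGeo x y ↔ (absFn x ≤ absFn y ∧ sgnFn x ≤ sgnFn y)) ∧
    (∀ (N : ℕ) (R : Fin N → NzReal → NzReal → Prop),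
      (∀ i, IsLinearExtension rGeo (R i) ∧ DebreuSeparable (R i)) →
      ∃ x y, ¬ rGeo x y ∧ ∀ i, R i x y) := by
  refine ⟨rGeo_isPartialOrderRel, fun _ _ => Iff.rfl, fun N R hR => ?_⟩
  obtain ⟨s, u, hne, hinterlock⟩ :=
    exists_ne_forall_rel_of_debreuSeparable (fun i => (hR i).2) (fun i => (hR i).1.1.2.2)
      (a := negExpNz) (b := expNz) (fun i t => (hR i).1.2.2 _ _ (rGeo_negExpNz_expNz t))
      (fun i t => (hR i).1.not_rel_of_rel_of_ne (rGeo_negExpNz_expNz t) (negExpNz_ne_expNz t))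
  rcases hne.lt_or_gt with hsu | hus
  · exact ⟨_, _, not_rGeo_negExpNz_expNz_of_lt hsu, fun i => (hinterlock i).2⟩
  · exact ⟨_, _, not_rGeo_negExpNz_expNz_of_lt hus, fun i => (hinterlock i).1⟩
end

section
/- Let (X,≼) be a Debreu separable preorder and let I be a finite set. Then (X,≼) has a multi-utility (uᵢ)ᵢ∈I indexed by I if and only if it has a strict monotone multi-utility (vᵢ)ᵢ∈I indexed by I. -/
/-!
Each utility `u` of the multi-utility is replaced by a strict monotone `v` with
`v x ≤ v y → u x ≤ u y`. Refine `r` lexicographically by `u` (compare `u` first, then `r`), fix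
positive summable weights on a countable Debreu dense set `D`, and let `w x` be the weight of the
points of `D` below `x` minus the weight of those above `x` in the refinement. Then `v = u + w` is
monotone for the refinement, which gives `v x ≤ v y → u x ≤ u y`. If `x ≺ y` and `u x = u y`, a
point `d ∈ D` with `x ≼ d ≼ y` has `u d = u x`, so it lies above `x` but not above `y`, or below `y`
but not below `x`; either way `w x < w y`.
-/
def IsStrictMonotone {X : Type*} (r : X → X → Prop) (v : X → ℝ) : Prop :=
  (∀ x y, r x y → v x ≤ v y) ∧ (∀ x y, r x y → ¬ r y x → v x < v y)

section SetWeight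

variable {ι : Type*} {ε : ι → ℝ} {S T : Set ι}

noncomputable def setWeight (ε : ι → ℝ) (S : Set ι) : ℝ :=
  ∑' i, S.indicator ε i

theorem setWeight_mono (hε : Summable ε) (hε₀ : ∀ i, 0 ≤ ε i) (hST : S ⊆ T) :
    setWeight ε S ≤ setWeight ε T :=
  (hε.indicator S).tsum_le_tsum (Set.indicator_le_indicator_of_subset hST hε₀) (hε.indicator T)

theorem setWeight_lt (hε : Summable ε) (hε₀ : ∀ i, 0 < ε i) (hST : S ⊆ T) {i : ι}
    (hiT : i ∈ T) (hiS : i ∉ S) : setWeight ε S < setWeight ε T := by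
  refine (hε.indicator S).tsum_lt_tsum (i := i)
    (Set.indicator_le_indicator_of_subset hST fun j ↦ (hε₀ j).le) ?_ (hε.indicator T)
  simpa [hiT, hiS] using hε₀ i

end SetWeight

section StrictMonotone

variable {X : Type*} {s r : X → X → Prop} {D : Set X}

theorem exists_monotone_lt_of_exists_between (htrans : ∀ x y z, s x y → s y z → s x z)
    (hD : D.Countable) :
    ∃ w : X → ℝ, (∀ x y, s x y → w x ≤ w y) ∧
      ∀ x y, s x y → ¬ s y x → (∃ d ∈ D, s x d ∧ s d y) → w x < w y := by
  obtain ⟨ε, hε₀, c, hεc, -⟩ := hD.exists_pos_hasSum_le one_pos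
  set μ : Set D → ℝ := setWeight fun d ↦ ε d
  have hε : Summable fun d : D ↦ ε d := hεc.summable
  have hμ_mono {S T : Set D} (hST : S ⊆ T) : μ S ≤ μ T :=
    setWeight_mono hε (fun d ↦ (hε₀ d).le) hST
  let below (x : X) : Set D := {d | s d x}
  let above (x : X) : Set D := {d | s x d}
  have below_mono {x y} (hxy : s x y) : below x ⊆ below y := fun d hd ↦ htrans _ _ _ hd hxy
  have above_anti {x y} (hxy : s x y) : above y ⊆ above x := fun d hd ↦ htrans _ _ _ hxy hd
  refine ⟨fun x ↦ μ (below x) - μ (above x), fun x y hxy ↦ ?_,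
    fun x y hxy hyx ⟨d, hdD, hxd, hdy⟩ ↦ ?_⟩
  · linarith [hμ_mono (below_mono hxy), hμ_mono (above_anti hxy)]
  · have := hμ_mono (below_mono hxy)
    have := hμ_mono (above_anti hxy)
    by_cases hdx : s d x
    · have := setWeight_lt hε (fun d ↦ hε₀ d) (above_anti hxy) (i := ⟨d, hdD⟩) hxd
        fun hyd ↦ hyx (htrans _ _ _ hyd hdx)
      linarith
    · have := setWeight_lt hε (fun d ↦ hε₀ d) (below_mono hxy) (i := ⟨d, hdD⟩) hdy hdx
      linarith

def LexRefine (u : X → ℝ) (r : X → X → Prop) (x y : X) : Prop :=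
  u x < u y ∨ (u x = u y ∧ r x y)

theorem lexRefine_trans {u : X → ℝ} (htrans : ∀ x y z, r x y → r y z → r x z) (x y z : X) :
    LexRefine u r x y → LexRefine u r y z → LexRefine u r x z := by
  rintro (hxy | ⟨hxy, rxy⟩) (hyz | ⟨hyz, ryz⟩)
  · exact .inl (hxy.trans hyz)
  · exact .inl (hxy.trans_eq hyz)
  · exact .inl (hxy.trans_lt hyz)
  · exact .inr ⟨hxy.trans hyz, htrans _ _ _ rxy ryz⟩

theorem lexRefine_of_rel {u : X → ℝ} (hu : ∀ x y, r x y → u x ≤ u y) {x y : X} (hxy : r x y) :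
    LexRefine u r x y :=
  (hu x y hxy).lt_or_eq.imp_right fun h ↦ ⟨h, hxy⟩

theorem not_lexRefine_of_not_rel {u : X → ℝ} (hu : ∀ x y, r x y → u x ≤ u y) {x y : X}
    (hxy : r x y) (hyx : ¬ r y x) : ¬ LexRefine u r y x := by
  rintro (h | ⟨-, h⟩)
  exacts [(hu x y hxy).not_gt h, hyx h]

theorem exists_isStrictMonotone_le_imp_le (htrans : ∀ x y z, r x y → r y z → r x z)
    (hsep : DebreuSeparable r) {u : X → ℝ} (hu : ∀ x y, r x y → u x ≤ u y) :
    ∃ v : X → ℝ, IsStrictMonotone r v ∧ ∀ x y, v x ≤ v y → u x ≤ u y := by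
  obtain ⟨D, hDc, hDd⟩ := hsep
  obtain ⟨w, hw_mono, hw_lt⟩ := exists_monotone_lt_of_exists_between (lexRefine_trans
    (u := u) htrans) hDc
  refine ⟨u + w, ⟨fun x y hxy ↦ ?_, fun x y hxy hyx ↦ ?_⟩, fun x y hvxy ↦ ?_⟩
  · exact add_le_add (hu x y hxy) (hw_mono x y (lexRefine_of_rel hu hxy))
  · obtain hlt | heq := (hu x y hxy).lt_or_eq
    · exact add_lt_add_of_lt_of_le hlt (hw_mono x y (lexRefine_of_rel hu hxy))
    · obtain ⟨d, hdD, hxd, hdy⟩ := hDd x y hxy hyx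
      have hud : u x = u d := le_antisymm (hu x d hxd) (heq ▸ hu d y hdy)
      refine add_lt_add_of_le_of_lt heq.le (hw_lt x y (lexRefine_of_rel hu hxy)
        (not_lexRefine_of_not_rel hu hxy hyx) ⟨d, hdD, .inr ⟨hud, hxd⟩, .inr ⟨hud.symm.trans heq, hdy⟩⟩)
  · by_contra! hlt
    exact (add_lt_add_of_lt_of_le hlt (hw_mono y x (.inl hlt))).not_ge hvxy

end StrictMonotone

theorem debreuSeparable_finite_multiUtility_iff_strictMonotoneMultiUtility_general {X : Type*}
    (r : X → X → Prop)
    (htrans : ∀ x y z, r x y → r y z → r x z)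
    (hsep : DebreuSeparable r) (I : Type*) :
    (∃ u : I → X → ℝ, ∀ x y, r x y ↔ ∀ i, u i x ≤ u i y) ↔
    (∃ v : I → X → ℝ,
      (∀ x y, r x y ↔ ∀ i, v i x ≤ v i y) ∧
      (∀ i, (∀ x y, r x y → v i x ≤ v i y) ∧
            (∀ x y, r x y → ¬ r y x → v i x < v i y))) := by
  refine ⟨fun ⟨u, hu⟩ ↦ ?_, fun ⟨v, hv, _⟩ ↦ ⟨v, hv⟩⟩
  choose v hv_strict hv_le using fun i ↦
    exists_isStrictMonotone_le_imp_le htrans hsep fun x y hxy ↦ (hu x y).mp hxy i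
  refine ⟨v, fun x y ↦ ⟨fun hxy i ↦ (hv_strict i).1 x y hxy, fun hvxy ↦ ?_⟩, hv_strict⟩
  exact (hu x y).mpr fun i ↦ hv_le i x y (hvxy i)

theorem debreuSeparable_finite_multiUtility_iff_strictMonotoneMultiUtility {X : Type*}
    (r : X → X → Prop)
    (hrefl : ∀ x, r x x) (htrans : ∀ x y z, r x y → r y z → r x z)
    (hsep : DebreuSeparable r) (I : Type*) [Finite I] :
    (∃ u : I → X → ℝ, ∀ x y, r x y ↔ ∀ i, u i x ≤ u i y) ↔
    (∃ v : I → X → ℝ,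
      (∀ x y, r x y ↔ ∀ i, v i x ≤ v i y) ∧
      (∀ i, (∀ x y, r x y → v i x ≤ v i y) ∧
            (∀ x y, r x y → ¬ r y x → v i x < v i y))) :=
  debreuSeparable_finite_multiUtility_iff_strictMonotoneMultiUtility_general r htrans hsep I
end

section
/- Let X = ℝ \ {0}, and define x ≼ y iff |x| ≤ |y| and sgn(x) ≤ sgn(y), where sgn(x) = 1 if x > 0 and sgn(x) = −1 if x < 0. Then, although (|·|, sgn) is a multi-utility for (X,≼) of cardinality 2, (X,≼) has no finite strict monotone multi-utility: for every natural number N and every family (vⱼ)ⱼ₌₁,…,N of strict monotones for ≼, it is not the case that for all x, y ∈ X one has x ≼ y iff vⱼ(x) ≤ vⱼ(y) for all j = 1,…,N. -/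
open Set

theorem countable_of_separated_boxes {ι T : Type*} [Finite ι] [LinearOrder T]
    (lo hi : T → ι → ℝ) (h_lt : ∀ t j, lo t j < hi t j)
    (h_sep : ∀ s t, s < t → ∃ j, hi s j ≤ lo t j) : Countable T := by
  let box : T → Set (ι → ℝ) := fun t => univ.pi fun j => Ioo (lo t j) (hi t j)
  have h_disj : Pairwise (Function.onFun Disjoint box) :=
    (pairwise_disjoint_on box).2 fun s t hst => by
      obtain ⟨j, hj⟩ := h_sep s t hst
      exact disjoint_left.2 fun w hws hwt =>
        lt_irrefl _ (hj.trans_lt ((hwt j trivial).1.trans (hws j trivial).2))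
  exact h_disj.countable_of_isOpen_disjoint
    (fun t => isOpen_set_pi finite_univ fun j _ => isOpen_Ioo)
    (fun t => univ_pi_nonempty_iff.2 fun j => nonempty_Ioo.2 (h_lt t j))

theorem countable_of_strict_pairs {X ι T : Type*} [Finite ι] [LinearOrder T]
    {r : X → X → Prop} {v : ι → X → ℝ}
    (hv : ∀ j x y, r x y → ¬ r y x → v j x < v j y)
    (hr : ∀ x y, (∀ j, v j x ≤ v j y) → r x y)
    (a b : T → X) (hab : ∀ t, r (a t) (b t) ∧ ¬ r (b t) (a t))
    (h_cross : ∀ s t, s < t → ¬ r (a t) (b s)) : Countable T := by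
  refine countable_of_separated_boxes (fun t j => v j (a t)) (fun t j => v j (b t))
    (fun t j => hv j _ _ (hab t).1 (hab t).2) fun s t hst => ?_
  obtain ⟨j, hj⟩ := not_forall.1 (mt (hr _ _) (h_cross s t hst))
  exact ⟨j, (not_le.1 hj).le⟩

theorem rGeo_strict_of_neg_of_pos {x y : NzReal} (hx : x.1 < 0) (hy : 0 < y.1)
    (habs : |x.1| ≤ |y.1|) : rGeo x y ∧ ¬ rGeo y x := by
  simp only [rGeo, absFn, sgnFn, if_pos hy, if_neg (not_lt.2 hx.le)]
  norm_num [habs]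

theorem not_rGeo_of_abs_lt {x y : NzReal} (h : |y.1| < |x.1|) : ¬ rGeo x y :=
  fun hxy => (not_le.2 h) hxy.1

theorem rGeo_no_finite_strictMonotoneMultiUtility :
    (∀ x y, rGeo x y ↔ (absFn x ≤ absFn y ∧ sgnFn x ≤ sgnFn y)) ∧
    (∀ (N : ℕ) (v : Fin N → NzReal → ℝ),
      (∀ j, (∀ x y, rGeo x y → v j x ≤ v j y) ∧
            (∀ x y, rGeo x y → ¬ rGeo y x → v j x < v j y)) →
      ¬ (∀ x y, rGeo x y ↔ ∀ j, v j x ≤ v j y)) := by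
  refine ⟨fun _ _ => Iff.rfl, fun N v hv hmulti => ?_⟩
  let pos : ℝ → NzReal := fun t => ⟨Real.exp t, (Real.exp_pos t).ne'⟩
  let neg : ℝ → NzReal := fun t => ⟨-Real.exp t, neg_ne_zero.2 (Real.exp_pos t).ne'⟩
  have habs : ∀ s t, |(neg s).1| = Real.exp s ∧ |(pos t).1| = Real.exp t := fun s t => by
    simp [neg, pos, abs_of_pos (Real.exp_pos _)]
  have : Countable ℝ :=
    countable_of_strict_pairs (fun j => (hv j).2) (fun x y => (hmulti x y).2) neg pos
      (fun t => rGeo_strict_of_neg_of_pos (neg_neg_of_pos (Real.exp_pos t)) (Real.exp_pos t)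
        (by rw [(habs t t).1, (habs t t).2]))
      fun s t hst => not_rGeo_of_abs_lt <| by
        rw [(habs t s).1, (habs t s).2]
        exact Real.exp_lt_exp.2 hst
  exact not_countable this
end

section
/- Let X = ℝ \ {0}, let u₁(x) = x and u₂(x) = 1/x, and define x ≼ y iff u₁(x) ≤ u₁(y) and u₂(x) ≤ u₂(y). Then ≼ is a partial order on X, the pair (u₁, u₂) is a strict monotone multi-utility for (X,≼), and: every Debreu dense subset of (X,≼) is uncountable, and every Debreu upper dense subset of (X,≼) is uncountable. In particular, there exist preorders with a finite strict monotone multi-utility that are neither Debreu separable nor Debreu upper separable. -/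
/-- `D` is Debreu upper dense for `r`. -/
def DebreuUpperDense {X : Type*} (r : X → X → Prop) (D : Set X) : Prop :=
  ∀ x y, Incomp r x y → ∃ d ∈ D, Incomp r x d ∧ r d y

/-- First utility: the identity. -/
def uId : NzReal → ℝ := fun x => x.1

/-- Second utility: the reciprocal. -/
noncomputable def uInv : NzReal → ℝ := fun x => 1 / x.1

/-- The partial order of Proposition 6. -/
noncomputable def rInv : NzReal → NzReal → Prop := fun x y =>
  uId x ≤ uId y ∧ uInv x ≤ uInv y

/-!
Two distinct nonzero reals `x, y` satisfy `x ≼ y` exactly when `x < 0 < y`: for `x, y` of the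
same sign, `x ≤ y` and `1/x ≤ 1/y` force `x = y`. Hence `x ≺ y` means `x < 0 < y`, and any `d`
with `x ≼ d ≼ y` is `x` or `y`. A Debreu dense set therefore contains every negative number, or,
missing some negative `x`, it must contain every positive `y`. For upper density, two distinct
negatives are incomparable and the only element below a negative `y` is `y` itself, so an upper
dense set contains every negative number. Either way it contains a copy of a half-line.
-/

theorem Real.not_countable_Iio (a : ℝ) : ¬ (Set.Iio a).Countable := by
  rw [← Cardinal.le_aleph0_iff_set_countable, Cardinal.mk_Iio_real]
  exact Cardinal.aleph0_lt_continuum.not_ge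

theorem Real.not_countable_Ioi (a : ℝ) : ¬ (Set.Ioi a).Countable := by
  rw [← Cardinal.le_aleph0_iff_set_countable, Cardinal.mk_Ioi_real]
  exact Cardinal.aleph0_lt_continuum.not_ge

namespace NzReal

lemma not_countable_of_neg_subset {D : Set NzReal} (hD : ∀ x : NzReal, x.1 < 0 → x ∈ D) :
    ¬ D.Countable := by
  refine fun hc => Real.not_countable_Iio 0 ((hc.image Subtype.val).mono ?_)
  intro r hr
  exact ⟨⟨r, hr.ne⟩, hD _ hr, rfl⟩

lemma not_countable_of_pos_subset {D : Set NzReal} (hD : ∀ x : NzReal, 0 < x.1 → x ∈ D) :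
    ¬ D.Countable := by
  refine fun hc => Real.not_countable_Ioi 0 ((hc.image Subtype.val).mono ?_)
  intro r hr
  exact ⟨⟨r, hr.ne'⟩, hD _ hr, rfl⟩

end NzReal

lemma uInv_lt_of_neg_of_pos {x y : NzReal} (hx : x.1 < 0) (hy : 0 < y.1) : uInv x < uInv y :=
  (one_div_neg.mpr hx).trans (one_div_pos.mpr hy)

lemma rInv_iff (x y : NzReal) : rInv x y ↔ x = y ∨ (x.1 < 0 ∧ 0 < y.1) := by
  constructor
  · rintro ⟨hle, hinv_le⟩
    by_cases hxy : x.1 < 0 ∧ 0 < y.1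
    · exact .inr hxy
    refine .inl (Subtype.ext (le_antisymm hle ?_))
    rcases lt_or_gt_of_ne x.2 with hx | hx
    · have hy : y.1 < 0 := (lt_or_gt_of_ne y.2).resolve_right fun hy => hxy ⟨hx, hy⟩
      exact (one_div_le_one_div_of_neg hx hy).mp hinv_le
    · exact (one_div_le_one_div hx (hx.trans_le hle)).mp hinv_le
  · rintro (rfl | ⟨hx, hy⟩)
    · exact ⟨le_rfl, le_rfl⟩
    · exact ⟨(hx.trans hy).le, (uInv_lt_of_neg_of_pos hx hy).le⟩

lemma rInv_of_neg_of_pos {x y : NzReal} (hx : x.1 < 0) (hy : 0 < y.1) : rInv x y :=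
  (rInv_iff x y).mpr (.inr ⟨hx, hy⟩)

lemma rInv.eq_of_pos_left {x y : NzReal} (h : rInv x y) (hx : 0 < x.1) : x = y :=
  ((rInv_iff x y).mp h).resolve_right fun h' => hx.not_gt h'.1

lemma rInv.eq_of_neg_right {x y : NzReal} (h : rInv x y) (hy : y.1 < 0) : x = y :=
  ((rInv_iff x y).mp h).resolve_right fun h' => hy.not_gt h'.2

lemma rInv_strict_iff (x y : NzReal) : rInv x y ∧ ¬ rInv y x ↔ x.1 < 0 ∧ 0 < y.1 := by
  refine ⟨fun ⟨hxy, hyx⟩ => ((rInv_iff x y).mp hxy).resolve_left ?_, fun ⟨hx, hy⟩ => ?_⟩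
  · rintro rfl
    exact hyx hxy
  · exact ⟨rInv_of_neg_of_pos hx hy, fun h => hx.not_gt (hy.trans_le h.1)⟩

lemma isPartialOrderRel_rInv : IsPartialOrderRel rInv := by
  refine ⟨fun x => ⟨le_rfl, le_rfl⟩, fun x y hxy hyx => ?_, fun x y z hxy hyz => ?_⟩
  · exact Subtype.ext (le_antisymm hxy.1 hyx.1)
  · rcases (rInv_iff x y).mp hxy with rfl | ⟨hx, hy⟩
    · exact hyz
    · rw [← hyz.eq_of_pos_left hy]
      exact hxy

lemma rInv_strictMono {x y : NzReal} (hxy : rInv x y) (hyx : ¬ rInv y x) :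
    uId x < uId y ∧ uInv x < uInv y := by
  obtain ⟨hx, hy⟩ := (rInv_strict_iff x y).mp ⟨hxy, hyx⟩
  exact ⟨hx.trans hy, uInv_lt_of_neg_of_pos hx hy⟩

lemma DebreuDense.not_countable_rInv {D : Set NzReal} (hD : DebreuDense rInv D) :
    ¬ D.Countable := by
  obtain ⟨x, hx, hxD⟩ | hneg := em (∃ x : NzReal, x.1 < 0 ∧ x ∉ D)
  swap
  · exact NzReal.not_countable_of_neg_subset fun x hx => by_contra fun hxD => hneg ⟨x, hx, hxD⟩
  refine NzReal.not_countable_of_pos_subset fun y hy => ?_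
  obtain ⟨hxy, hyx⟩ := (rInv_strict_iff x y).mpr ⟨hx, hy⟩
  obtain ⟨d, hdD, hxd, hdy⟩ := hD x y hxy hyx
  have hd : 0 < d.1 := (((rInv_iff x d).mp hxd).resolve_left fun h => hxD (h ▸ hdD)).2
  exact hdy.eq_of_pos_left hd ▸ hdD

lemma DebreuUpperDense.not_countable_rInv {D : Set NzReal} (hD : DebreuUpperDense rInv D) :
    ¬ D.Countable := by
  refine NzReal.not_countable_of_neg_subset fun y hy => ?_
  let x : NzReal := ⟨y.1 - 1, by linarith⟩
  have hx : x.1 < 0 := by simp only [x]; linarith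
  have hxy : x ≠ y := fun h => by simpa [x] using congrArg Subtype.val h
  have hinc : Incomp rInv x y :=
    ⟨fun h => hxy (h.eq_of_neg_right hy), fun h => hxy (h.eq_of_neg_right hx).symm⟩
  obtain ⟨d, hdD, -, hdy⟩ := hD x y hinc
  exact hdy.eq_of_neg_right hy ▸ hdD

theorem rInv_strictMonotoneMultiUtility_not_debreu_separable :
    IsPartialOrderRel rInv ∧
    (∀ x y, rInv x y ↔ (uId x ≤ uId y ∧ uInv x ≤ uInv y)) ∧
    (∀ x y, rInv x y → uId x ≤ uId y ∧ uInv x ≤ uInv y) ∧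
    (∀ x y, rInv x y → ¬ rInv y x → uId x < uId y ∧ uInv x < uInv y) ∧
    (∀ D : Set NzReal, DebreuDense rInv D → ¬ D.Countable) ∧
    (∀ D : Set NzReal, DebreuUpperDense rInv D → ¬ D.Countable) :=
  ⟨isPartialOrderRel_rInv, fun _ _ => Iff.rfl, fun _ _ h => h, fun _ _ => rInv_strictMono,
    fun _ => DebreuDense.not_countable_rInv, fun _ => DebreuUpperDense.not_countable_rInv⟩
end

section
/- Let (X,≼) be a Debreu separable partial order. Then (X,≼) has a multi-utility consisting of two functions if and only if it has a Debreu separable realizer consisting of two linear extensions. -/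
/-!
Given a two-element multi-utility `(u₀, u₁)`, the lexicographic orders by `(u₀, u₁)` and by
`(u₁, u₀)` are linear extensions whose intersection is `≼`. A pair strict for the first one is
either already strict for `≼`, or `u₀` takes a value strictly between its two `u₀`-values, or it
straddles a gap of `u₀(X)`. The first kind is separated by the Debreu dense set of `≼`, the second
by countably many points, one in each nonempty `u₀⁻¹(p, q)` with `p, q` rational, and the third by
one point per gap maximising `u₁` on the fibre below the gap; there are only countably many gaps.

Conversely, a total preorder with a countable Debreu dense set `D` has the utility
`u x = ∑_{d ∈ D, d ≼ x} w d + ∑_{d ∈ D, d ≺ x} w d` for positive summable weights `w`.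
-/

section

variable {X : Type*}

theorem isLinearExtension_of_injective {L : Type*} [LinearOrder L] {r : X → X → Prop}
    {φ : X → L} (hφ : Function.Injective φ) (hmono : ∀ x y, r x y → φ x ≤ φ y) :
    IsLinearExtension r (fun x y => φ x ≤ φ y) :=
  ⟨⟨fun _ => le_rfl, fun _ _ hxy hyx => hφ (le_antisymm hxy hyx), fun _ _ _ => le_trans⟩,
    fun x y => le_total (φ x) (φ y), hmono⟩

section Lex

variable {α β : Type*} [LinearOrder α] [LinearOrder β] {f : X → α} {g : X → β} {x y : X}

def LexRel (f : X → α) (g : X → β) (x y : X) : Prop :=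
  toLex (f x, g x) ≤ toLex (f y, g y)

theorem lexRel_iff : LexRel f g x y ↔ f x < f y ∨ f x = f y ∧ g x ≤ g y :=
  Prod.Lex.toLex_le_toLex

theorem not_lexRel_iff : ¬LexRel f g x y ↔ f y < f x ∨ f y = f x ∧ g y < g x :=
  not_le.trans Prod.Lex.toLex_lt_toLex

theorem LexRel.le_left (h : LexRel f g x y) : f x ≤ f y :=
  (lexRel_iff.1 h).elim le_of_lt fun h => h.1.le

theorem lexRel_of_lt (h : f x < f y) : LexRel f g x y :=
  lexRel_iff.2 (.inl h)

theorem lexRel_of_le_of_le (hf : f x ≤ f y) (hg : g x ≤ g y) : LexRel f g x y :=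
  hf.lt_or_eq.elim lexRel_of_lt fun h => lexRel_iff.2 (.inr ⟨h, hg⟩)

theorem lexRel_and_lexRel_swap_iff :
    LexRel f g x y ∧ LexRel g f x y ↔ f x ≤ f y ∧ g x ≤ g y :=
  ⟨fun h => ⟨h.1.le_left, h.2.le_left⟩,
    fun h => ⟨lexRel_of_le_of_le h.1 h.2, lexRel_of_le_of_le h.2 h.1⟩⟩

theorem isLinearExtension_lexRel_s16 {r : X → X → Prop} (hr : IsPartialOrderRel r)
    (h : ∀ x y, r x y ↔ f x ≤ f y ∧ g x ≤ g y) : IsLinearExtension r (LexRel f g) := by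
  refine isLinearExtension_of_injective (φ := fun x => toLex (f x, g x)) (fun x y hxy => ?_)
    fun x y hxy => lexRel_of_le_of_le ((h x y).1 hxy).1 ((h x y).1 hxy).2
  obtain ⟨hf, hg⟩ := Prod.ext_iff.1 (toLex.injective hxy)
  exact hr.2.1 x y ((h x y).2 ⟨hf.le, hg.le⟩) ((h y x).2 ⟨hf.ge, hg.ge⟩)

theorem exists_countable_forall_lt_lt (f : X → ℝ) :
    ∃ C : Set X, C.Countable ∧ ∀ a b z, a < f z → f z < b → ∃ c ∈ C, a < f c ∧ f c < b := by
  let S := {p : ℚ × ℚ // ∃ z, (p.1 : ℝ) < f z ∧ f z < p.2}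
  refine ⟨Set.range fun p : S => p.2.choose, Set.countable_range _, fun a b z haz hzb => ?_⟩
  obtain ⟨p, hap, hpz⟩ := exists_rat_btwn haz
  obtain ⟨q, hzq, hqb⟩ := exists_rat_btwn hzb
  let s : S := ⟨(p, q), z, hpz, hzq⟩
  obtain ⟨hpc, hcq⟩ := s.2.choose_spec
  exact ⟨_, ⟨s, rfl⟩, hap.trans hpc, hcq.trans hqb⟩

/-- A rational `q` determines the value `f x` of an `x` with `f x < q` and no value of `f` in
`(f x, q]`, so one chosen point per rational suffices. -/
theorem exists_countable_fiberMax_below_gap (f : X → ℝ) (g : X → β) :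
    ∃ M : Set X, M.Countable ∧ ∀ x, (∃ q : ℚ, f x < q ∧ ∀ z, f x < f z → q < f z) →
      (∀ w, f w = f x → g w ≤ g x) → ∃ m ∈ M, f m = f x ∧ g m = g x := by
  let S := {q : ℚ // ∃ x, f x < q ∧ (∀ z, f x < f z → q < f z) ∧ ∀ w, f w = f x → g w ≤ g x}
  refine ⟨Set.range fun q : S => q.2.choose, Set.countable_range _, ?_⟩
  rintro x ⟨q, hxq, hgap⟩ hmax
  let s : S := ⟨q, x, hxq, hgap, hmax⟩
  obtain ⟨hmq, hmgap, hmmax⟩ := s.2.choose_spec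
  have hfm : f s.2.choose = f x := by
    rcases lt_trichotomy (f s.2.choose) (f x) with hlt | heq | hgt
    · exact absurd (hmgap x hlt) hxq.le.not_gt
    · exact heq
    · exact absurd (hgap _ hgt) hmq.le.not_gt
  exact ⟨_, ⟨s, rfl⟩, hfm, le_antisymm (hmax _ hfm) (hmmax x hfm.symm)⟩

theorem debreuSeparable_lexRel {r : X → X → Prop} {f : X → ℝ}
    (h : ∀ x y, r x y ↔ f x ≤ f y ∧ g x ≤ g y) (hsep : DebreuSeparable r) :
    DebreuSeparable (LexRel f g) := by
  obtain ⟨D, hDc, hD⟩ := hsep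
  obtain ⟨C, hCc, hC⟩ := exists_countable_forall_lt_lt f
  obtain ⟨M, hMc, hM⟩ := exists_countable_fiberMax_below_gap f g
  have hext : RelExtends r (LexRel f g) := fun x y hxy =>
    lexRel_of_le_of_le ((h x y).1 hxy).1 ((h x y).1 hxy).2
  have hDlex : ∀ x y, r x y → ¬LexRel f g y x → ∃ d ∈ D, LexRel f g x d ∧ LexRel f g d y :=
    fun x y hxy hyx =>
      let ⟨d, hd, hxd, hdy⟩ := hD x y hxy fun hyx' => hyx (hext _ _ hyx')
      ⟨d, hd, hext _ _ hxd, hext _ _ hdy⟩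
  refine ⟨D ∪ C ∪ M, (hDc.union hCc).union hMc, fun x y hxy hyx => ?_⟩
  by_cases hg : g x ≤ g y
  · obtain ⟨d, hd, hxd, hdy⟩ := hDlex x y ((h x y).2 ⟨hxy.le_left, hg⟩) hyx
    exact ⟨d, .inl (.inl hd), hxd, hdy⟩
  have hf : f x < f y := (lexRel_iff.1 hxy).resolve_right fun h => hg h.2
  by_cases hz : ∃ z, f x < f z ∧ f z < f y
  · obtain ⟨z, hxz, hzy⟩ := hz
    obtain ⟨c, hc, hxc, hcy⟩ := hC _ _ z hxz hzy
    exact ⟨c, .inl (.inr hc), lexRel_of_lt hxc, lexRel_of_lt hcy⟩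
  by_cases hx' : ∃ x', f x' = f x ∧ g x < g x'
  · obtain ⟨x', hfx', hgx'⟩ := hx'
    obtain ⟨d, hd, hxd, hdx'⟩ :=
      hDlex x x' ((h x x').2 ⟨hfx'.ge, hgx'.le⟩) (not_lexRel_iff.2 (.inr ⟨hfx'.symm, hgx'⟩))
    exact ⟨d, .inl (.inl hd), hxd, lexRel_of_lt ((hdx'.le_left.trans hfx'.le).trans_lt hf)⟩
  push Not at hz hx'
  obtain ⟨q, hxq, hqy⟩ := exists_rat_btwn hf
  obtain ⟨m, hm, hfm, hgm⟩ := hM x ⟨q, hxq, fun z hxz => hqy.trans_le (hz z hxz)⟩ hx'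
  exact ⟨m, .inr hm, lexRel_of_le_of_le hfm.ge hgm.ge, lexRel_of_lt (hfm ▸ hf)⟩

end Lex

section Utility

variable {R : X → X → Prop} {D : Set X} {w : X → ℝ}

noncomputable def belowWeight (R : X → X → Prop) (D : Set X) (w : X → ℝ) (x : X) : D → ℝ :=
  {d : D | R d x}.indicator (w ∘ (↑)) + {d : D | R d x ∧ ¬R x d}.indicator (w ∘ (↑))

theorem belowWeight_mono (htrans : ∀ x y z, R x y → R y z → R x z) (hw : ∀ d, 0 ≤ w d)
    {x y : X} (hxy : R x y) : belowWeight R D w x ≤ belowWeight R D w y :=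
  add_le_add
    (Set.indicator_le_indicator_of_subset (fun _ hdx => htrans _ _ _ hdx hxy) fun _ => hw _)
    (Set.indicator_le_indicator_of_subset
      (fun _ ⟨hdx, hxd⟩ => ⟨htrans _ _ _ hdx hxy, fun hyd => hxd (htrans _ _ _ hxy hyd)⟩)
      fun _ => hw _)

/-- Counting strict predecessors a second time is what makes this strict when `d` is equivalent
to `y`. -/
theorem belowWeight_lt (htrans : ∀ x y z, R x y → R y z → R x z) (hw : ∀ d, 0 < w d)
    {x y : X} {d : D} (hyd : R y d) (hdx : R d x) (hxy : ¬R x y) :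
    belowWeight R D w y d < belowWeight R D w x d := by
  by_cases hdy : R d y
  · have hxd : ¬R x d := fun hxd => hxy (htrans _ _ _ hxd hdy)
    simp [belowWeight, hdy, hdx, hyd, hxd, hw]
  · simp only [belowWeight, Pi.add_apply, Set.mem_ofPred_eq, hdy, hdx, not_false_eq_true,
      Set.indicator_of_notMem, Set.indicator_of_mem, false_and, add_zero, Function.comp_apply]
    exact add_pos_of_pos_of_nonneg (hw d) (Set.indicator_nonneg (fun _ _ => (hw _).le) _)

theorem DebreuSeparable.exists_utility (hsep : DebreuSeparable R)
    (htrans : ∀ x y z, R x y → R y z → R x z) (htot : TotalRel R) :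
    ∃ u : X → ℝ, ∀ x y, R x y ↔ u x ≤ u y := by
  obtain ⟨D, hDc, hD⟩ := hsep
  obtain ⟨w, hw, c, hc, -⟩ := hDc.exists_pos_hasSum_le one_pos
  have hsum : ∀ x, Summable (belowWeight R D w x) := fun x =>
    (hc.summable.indicator _).add (hc.summable.indicator _)
  refine ⟨fun x => ∑' d, belowWeight R D w x d, fun x y => ⟨fun hxy =>
    Summable.tsum_le_tsum (belowWeight_mono htrans (fun d => (hw d).le) hxy) (hsum x) (hsum y),
    fun hle => ?_⟩⟩
  by_contra hxy
  have hyx := (htot x y).resolve_left hxy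
  obtain ⟨d, hd, hyd, hdx⟩ := hD y x hyx hxy
  exact hle.not_gt (Summable.tsum_lt_tsum (belowWeight_mono htrans (fun d => (hw d).le) hyx)
    (belowWeight_lt (d := ⟨d, hd⟩) htrans hw hyd hdx hxy) (hsum y) (hsum x))

end Utility

end

theorem debreuSeparable_multiUtility_two_iff_debreuSeparableRealizer_two {X : Type*}
    (r : X → X → Prop) (hr : IsPartialOrderRel r)
    (hsep : DebreuSeparable r) :
    (∃ u : Fin 2 → X → ℝ, ∀ x y, r x y ↔ ∀ i, u i x ≤ u i y) ↔
    (∃ R : Fin 2 → X → X → Prop,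
      (∀ i, IsLinearExtension r (R i) ∧ DebreuSeparable (R i)) ∧
      (∀ x y, r x y ↔ ∀ i, R i x y)) := by
  constructor
  · rintro ⟨u, hu⟩
    have h : ∀ x y, r x y ↔ u 0 x ≤ u 0 y ∧ u 1 x ≤ u 1 y := fun x y =>
      (hu x y).trans Fin.forall_fin_two
    have h' : ∀ x y, r x y ↔ u 1 x ≤ u 1 y ∧ u 0 x ≤ u 0 y := fun x y => (h x y).trans and_comm
    refine ⟨![LexRel (u 0) (u 1), LexRel (u 1) (u 0)], Fin.forall_fin_two.2 ⟨?_, ?_⟩,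
      fun x y => by rw [h, Fin.forall_fin_two]; exact lexRel_and_lexRel_swap_iff.symm⟩
    exacts [⟨isLinearExtension_lexRel_s16 hr h, debreuSeparable_lexRel h hsep⟩,
      ⟨isLinearExtension_lexRel_s16 hr h', debreuSeparable_lexRel h' hsep⟩]
  · rintro ⟨R, hR, hrR⟩
    choose u hu using fun i => (hR i).2.exists_utility (hR i).1.1.2.2 (hR i).1.2.1
    exact ⟨u, fun x y => (hrR x y).trans (forall_congr' fun i => hu i x y)⟩
end

section
/- Let (X,≼) be a Debreu separable partial order and suppose there exists a countable subset B ⊆ X such that for all x, y ∈ X with x ⋈ y, either x ∈ B or y ∈ B. Then for every finite N, (X,≼) has a multi-utility consisting of N functions if and only if it has a Debreu separable realizer consisting of N linear extensions. -/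
/-!
A multi-utility `u` gives a realizer: refine each `uᵢ` lexicographically by one fixed linear
extension of `≼`. Conversely each member of a Debreu separable realizer has a real utility by
Debreu's lemma. Separability of the realizer comes for free: a reflexive extension of `≼` can only
add strict comparisons between incomparable pairs, each of which has an endpoint in the countable
set `B`, so `D ∪ B` is Debreu dense for it whenever `D` is dense for `≼`.
-/

section Relations

variable {X : Type*}

abbrev IsPartialOrderRel.toPartialOrder {r : X → X → Prop} (hr : IsPartialOrderRel r) :
    PartialOrder X where
  le := r
  le_refl := hr.1
  le_trans := hr.2.2
  le_antisymm := hr.2.1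

noncomputable abbrev IsPartialOrderRel.toLinearOrder {r : X → X → Prop} (hr : IsPartialOrderRel r)
    (htot : TotalRel r) : LinearOrder X :=
  { hr.toPartialOrder with
    le_total := htot
    toDecidableLE := Classical.decRel r }

theorem isPartialOrderRel_comap_s17 {β : Type*} [PartialOrder β] {f : X → β}
    (hf : Function.Injective f) : IsPartialOrderRel fun x y => f x ≤ f y :=
  ⟨fun _ => le_rfl, fun _ _ hxy hyx => hf (le_antisymm hxy hyx), fun _ _ _ => le_trans⟩

theorem totalRel_comap_s17 {β : Type*} [LinearOrder β] (f : X → β) : TotalRel fun x y => f x ≤ f y :=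
  fun _ _ => le_total _ _

theorem DebreuSeparable.of_relExtends {r R : X → X → Prop} (hsep : DebreuSeparable r)
    {B : Set X} (hB : B.Countable) (hBcov : ∀ x y, Incomp r x y → x ∈ B ∨ y ∈ B)
    (hext : RelExtends r R) (hR : ∀ x, R x x) : DebreuSeparable R := by
  obtain ⟨D, hD, hdense⟩ := hsep
  refine ⟨D ∪ B, hD.union hB, fun x y hxy hyx => ?_⟩
  have hryx : ¬ r y x := fun h => hyx (hext _ _ h)
  by_cases hrxy : r x y
  · obtain ⟨d, hd, hxd, hdy⟩ := hdense x y hrxy hryx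
    exact ⟨d, Or.inl hd, hext _ _ hxd, hext _ _ hdy⟩
  · rcases hBcov x y ⟨hrxy, hryx⟩ with hx | hy
    · exact ⟨x, Or.inr hx, hR x, hxy⟩
    · exact ⟨y, Or.inr hy, hxy, hR y⟩

end Relations

theorem Summable.tsum_indicator_mono {ι : Type*} {w : ι → ℝ} (hw : Summable w) (hw0 : 0 ≤ w)
    {S T : Set ι} (hST : S ⊆ T) : ∑' i, S.indicator w i ≤ ∑' i, T.indicator w i :=
  (hw.indicator S).tsum_le_tsum (Set.indicator_le_indicator_of_subset hST hw0) (hw.indicator T)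

theorem Summable.tsum_indicator_lt {ι : Type*} {w : ι → ℝ} (hw : Summable w) (hw0 : ∀ i, 0 < w i)
    {S T : Set ι} (hST : S ⊆ T) {i : ι} (hiT : i ∈ T) (hiS : i ∉ S) :
    ∑' i, S.indicator w i < ∑' i, T.indicator w i := by
  refine (hw.indicator S).tsum_lt_tsum (i := i)
    (Set.indicator_le_indicator_of_subset hST fun j => (hw0 j).le) ?_ (hw.indicator T)
  rw [Set.indicator_of_notMem hiS, Set.indicator_of_mem hiT]
  exact hw0 i

/-- Debreu's lemma. Each point of `D` below `x` is counted twice, for `d ≤ x` and for `d < x`: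
the second count separates `x < y` when `x` itself is the point of `D` between them. -/
theorem exists_strictMono_real_of_debreuDense {α : Type*} [LinearOrder α] {D : Set α}
    (hD : D.Countable) (hdense : DebreuDense (· ≤ ·) D) : ∃ u : α → ℝ, StrictMono u := by
  obtain ⟨w, hw0, _, hw, -⟩ := hD.exists_pos_hasSum_le one_pos
  let mass : Set D → ℝ := fun S => ∑' d, S.indicator (fun d : D => w d) d
  refine ⟨fun x => mass {d | ↑d ≤ x} + mass {d | ↑d < x}, fun x y hxy => ?_⟩
  have hle : {d : D | ↑d ≤ x} ⊆ {d | ↑d ≤ y} := fun _ hd => le_trans hd hxy.le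
  have hlt : {d : D | ↑d < x} ⊆ {d | ↑d < y} := fun _ hd => lt_trans hd hxy
  obtain ⟨d, hd, hxd, hdy⟩ := hdense x y hxy.le hxy.not_ge
  rcases hxd.eq_or_lt with rfl | hxd
  · exact add_lt_add_of_le_of_lt (hw.summable.tsum_indicator_mono (fun d => (hw0 d).le) hle)
      (hw.summable.tsum_indicator_lt (fun d => hw0 d) hlt (i := ⟨x, hd⟩) hxy (lt_irrefl x))
  · exact add_lt_add_of_lt_of_le
      (hw.summable.tsum_indicator_lt (fun d => hw0 d) hle (i := ⟨d, hd⟩) hdy hxd.not_ge)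
      (hw.summable.tsum_indicator_mono (fun d => (hw0 d).le) hlt)

theorem exists_utility_of_debreuSeparable {X : Type*} {R : X → X → Prop}
    (hR : IsPartialOrderRel R) (htot : TotalRel R) (hsep : DebreuSeparable R) :
    ∃ u : X → ℝ, ∀ x y, R x y ↔ u x ≤ u y := by
  let _ := hR.toLinearOrder htot
  obtain ⟨D, hD, hdense⟩ := hsep
  obtain ⟨u, hu⟩ := exists_strictMono_real_of_debreuDense hD hdense
  exact ⟨u, fun x y => hu.le_iff_le.symm⟩

theorem exists_linearExtension_realizer_of_multiUtility {X ι : Type*} {r : X → X → Prop}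
    (hr : IsPartialOrderRel r) (u : ι → X → ℝ) (hu : ∀ x y, r x y ↔ ∀ i, u i x ≤ u i y) :
    ∃ R : ι → X → X → Prop, (∀ i, IsLinearExtension r (R i)) ∧ (∀ x y, r x y ↔ ∀ i, R i x y) := by
  let _ := hr.toPartialOrder
  let f : ι → X → Lex (ℝ × LinearExtension X) := fun i x => toLex (u i x, toLinearExtension x)
  have hf : ∀ i, Function.Injective (f i) := fun i _ _ h => congrArg Prod.snd (toLex.injective h)
  have hext : ∀ i, RelExtends r fun x y => f i x ≤ f i y := fun i x y hxy =>
    Prod.Lex.toLex_mono ⟨(hu x y).1 hxy i, toLinearExtension.monotone hxy⟩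
  refine ⟨fun i x y => f i x ≤ f i y,
    fun i => ⟨isPartialOrderRel_comap_s17 (hf i), totalRel_comap_s17 (f i), hext i⟩,
    fun x y => ⟨fun hxy i => hext i x y hxy, fun h => (hu x y).2 fun i => ?_⟩⟩
  exact Prod.Lex.monotone_fst _ _ (h i)

theorem debreuSeparable_multiUtility_N_iff_debreuSeparableRealizer_N {X : Type*}
    (r : X → X → Prop) (hr : IsPartialOrderRel r)
    (hsep : DebreuSeparable r)
    (B : Set X) (hB : B.Countable)
    (hBcov : ∀ x y, Incomp r x y → x ∈ B ∨ y ∈ B)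
    (N : ℕ) :
    (∃ u : Fin N → X → ℝ, ∀ x y, r x y ↔ ∀ i, u i x ≤ u i y) ↔
    (∃ R : Fin N → X → X → Prop,
      (∀ i, IsLinearExtension r (R i) ∧ DebreuSeparable (R i)) ∧
      (∀ x y, r x y ↔ ∀ i, R i x y)) := by
  constructor
  · rintro ⟨u, hu⟩
    obtain ⟨R, hR, hrR⟩ := exists_linearExtension_realizer_of_multiUtility hr u hu
    exact ⟨R, fun i => ⟨hR i, hsep.of_relExtends hB hBcov (hR i).2.2 (hR i).1.1⟩, hrR⟩
  · rintro ⟨R, hR, hrR⟩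
    choose u hu using fun i => exists_utility_of_debreuSeparable (hR i).1.1 (hR i).1.2.1 (hR i).2
    exact ⟨u, fun x y => (hrR x y).trans (forall_congr' fun i => hu i x y)⟩
end

section
/- Let n ≥ 3, let P = { p ∈ ℝⁿ : p₁ ≥ p₂ ≥ … ≥ pₙ ≥ 0 and Σₖ pₖ = 1 }, and define the majorization order p ≼ₘ q iff Σₖ₌₁,…,ᵢ pₖ ≤ Σₖ₌₁,…,ᵢ qₖ for all i = 1,…,n−1. Then (P,≼ₘ) has no finite strict monotone multi-utility: for every natural number N and every family (vⱼ)ⱼ₌₁,…,N of strict monotones for ≼ₘ, it is not the case that for all p, q ∈ P one has p ≼ₘ q iff vⱼ(p) ≤ vⱼ(q) for all j = 1,…,N. -/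
/-- The set of non-increasingly ordered probability vectors of length `n`. -/
def ProbVec (n : ℕ) : Type :=
  {p : Fin n → ℝ // (∀ i j : Fin n, i ≤ j → p j ≤ p i) ∧ (∀ i, 0 ≤ p i) ∧ ∑ k, p k = 1}

/-- The `i`-th partial sum of a vector `p : Fin n → ℝ`. -/
def partialSum {n : ℕ} (p : Fin n → ℝ) (i : ℕ) : ℝ :=
  ∑ k ∈ Finset.univ.filter (fun k : Fin n => (k : ℕ) < i), p k

/-- The majorization order on `ProbVec n`. -/
def Maj {n : ℕ} (p q : ProbVec n) : Prop :=
  ∀ i : ℕ, 1 ≤ i → i ≤ n - 1 → partialSum p.1 i ≤ partialSum q.1 i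

/-!
Suppose `v₁, …, v_N` were a strict monotone multi-utility. If `x ≺ y`, strict monotonicity makes
the open box `∏ⱼ (vⱼ x, vⱼ y) ⊆ ℝᴺ` nonempty, and if `x' ⋠ y` the multi-utility property gives a
coordinate `j` with `vⱼ y < vⱼ x'`. For `n ≥ 3` majorization contains a continuum of pairs
`x t ≺ y t` with `x s ⋠ y t` whenever `t < s`: fix the second partial sum of `x t` and `y t` at two
different values and let the common first partial sum grow with `t`. The corresponding boxes are
pairwise disjoint nonempty open subsets of the separable space `ℝᴺ`, so there are only countably
many of them.
-/

open Finset Function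

theorem countable_of_strictMonotone_multiUtility {X ι T : Type*} [Finite ι] [LinearOrder T]
    {r : X → X → Prop} {v : ι → X → ℝ} (hv : ∀ i x y, r x y → ¬ r y x → v i x < v i y)
    (hmu : ∀ x y, r x y ↔ ∀ i, v i x ≤ v i y) {x y : T → X}
    (hxy : ∀ t, r (x t) (y t) ∧ ¬ r (y t) (x t)) (hcross : ∀ s t, s < t → ¬ r (x t) (y s)) :
    Countable T := by
  let box : T → Set (ι → ℝ) := fun t => Set.univ.pi fun i => Set.Ioo (v i (x t)) (v i (y t))
  have box_nonempty (t : T) : (box t).Nonempty :=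
    Set.univ_pi_nonempty_iff.2 fun i => Set.nonempty_Ioo.2 (hv i _ _ (hxy t).1 (hxy t).2)
  have box_disjoint : Pairwise (Disjoint on box) := by
    refine (pairwise_disjoint_on box).2 fun s t hst => ?_
    obtain ⟨i, hi⟩ : ∃ i, v i (y s) < v i (x t) := by simpa [hmu] using hcross s t hst
    exact Set.disjoint_univ_pi.2 ⟨i, Set.Ioo_disjoint_Ioo.2 (by simp [hi.le])⟩
  exact box_disjoint.countable_of_isOpen_disjoint
    (fun t => isOpen_set_pi Set.finite_univ fun i _ => isOpen_Ioo) box_nonempty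

/-- Its partial sums are `a, b, 1, 1, …`. -/
def threeStep (a b : ℝ) : ℕ → ℝ
  | 0 => a
  | 1 => b - a
  | 2 => 1 - b
  | _ + 3 => 0

lemma sum_range_threeStep_of_three_le (a b : ℝ) {i : ℕ} (hi : 3 ≤ i) :
    ∑ m ∈ range i, threeStep a b m = 1 := by
  rw [eventually_constant_sum (fun m (hm : m ≥ 3) => ?_) hi]
  · simp [sum_range_succ, threeStep]
  · obtain ⟨k, rfl⟩ := Nat.exists_eq_add_of_le' hm
    rfl

lemma antitone_threeStep {a b : ℝ} (h₁ : b - a ≤ a) (h₂ : 1 - b ≤ b - a) (h₃ : b ≤ 1) :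
    Antitone (threeStep a b) := by
  refine antitone_nat_of_succ_le fun m => ?_
  rcases m with _ | _ | _ | m <;> simp only [threeStep] <;> linarith

lemma partialSum_eq_sum_range {n : ℕ} (g : ℕ → ℝ) {i : ℕ} (hi : i ≤ n) :
    partialSum (fun k : Fin n => g k) i = ∑ m ∈ range i, g m := by
  have range_filter : (range n).filter (· < i) = range i := by
    ext m
    simp only [mem_filter, mem_range]
    omega
  rw [partialSum, sum_filter, Fin.sum_univ_eq_sum_range (fun m => if m < i then g m else 0),
    ← sum_filter, range_filter]

def ProbVec.ofPartialSums (n : ℕ) (hn : 3 ≤ n) (a b : ℝ) (h₁ : b - a ≤ a) (h₂ : 1 - b ≤ b - a)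
    (h₃ : b ≤ 1) : ProbVec n :=
  ⟨fun k => threeStep a b k,
    fun _ _ hij => antitone_threeStep h₁ h₂ h₃ hij,
    fun k => (antitone_threeStep h₁ h₂ h₃ (Nat.le_add_right k 3)).trans_eq' rfl,
    by rw [Fin.sum_univ_eq_sum_range (threeStep a b), sum_range_threeStep_of_three_le a b hn]⟩

lemma maj_ofPartialSums_iff {n : ℕ} (hn : 3 ≤ n) {a b a' b' : ℝ} (h₁ : b - a ≤ a)
    (h₂ : 1 - b ≤ b - a) (h₃ : b ≤ 1) (h₁' : b' - a' ≤ a') (h₂' : 1 - b' ≤ b' - a')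
    (h₃' : b' ≤ 1) :
    Maj (ProbVec.ofPartialSums n hn a b h₁ h₂ h₃) (ProbVec.ofPartialSums n hn a' b' h₁' h₂' h₃') ↔
      a ≤ a' ∧ b ≤ b' := by
  simp only [Maj, ProbVec.ofPartialSums]
  constructor
  · intro h
    have hsum₁ := h 1 le_rfl (by omega)
    have hsum₂ := h 2 (by norm_num) (by omega)
    rw [partialSum_eq_sum_range _ (by omega), partialSum_eq_sum_range _ (by omega)] at hsum₁ hsum₂
    simp only [sum_range_succ, sum_range_zero, threeStep] at hsum₁ hsum₂
    constructor <;> linarith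
  · rintro ⟨ha, hb⟩ i hi hin
    rw [partialSum_eq_sum_range _ (by omega), partialSum_eq_sum_range _ (by omega)]
    rcases i with _ | _ | _ | i
    · omega
    · simpa [threeStep] using ha
    · simpa [sum_range_succ, threeStep] using hb
    · rw [sum_range_threeStep_of_three_le a b (by omega),
        sum_range_threeStep_of_three_le a' b' (by omega)]

theorem majorization_no_finite_strictMonotoneMultiUtility (n : ℕ) (hn : 3 ≤ n) :
    ∀ (N : ℕ) (v : Fin N → ProbVec n → ℝ),
      (∀ j, (∀ p q, Maj p q → v j p ≤ v j q) ∧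
            (∀ p q, Maj p q → ¬ Maj q p → v j p < v j q)) →
      ¬ (∀ p q, Maj p q ↔ ∀ j, v j p ≤ v j q) := by
  intro N v hv hmu
  let T := Set.Ioo (0 : ℝ) (1 / 20)
  let x (t : T) : ProbVec n :=
    ProbVec.ofPartialSums n hn (1 / 2 + t) (4 / 5) (by linarith [t.2.1]) (by linarith [t.2.2])
      (by norm_num)
  let y (t : T) : ProbVec n :=
    ProbVec.ofPartialSums n hn (1 / 2 + t) (9 / 10) (by linarith [t.2.1]) (by linarith [t.2.2])
      (by norm_num)
  have hxy (t : T) : Maj (x t) (y t) ∧ ¬ Maj (y t) (x t) := by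
    simp only [x, y, maj_ofPartialSums_iff]
    norm_num
  have hcross (s t : T) (hst : s < t) : ¬ Maj (x t) (y s) := by
    simp only [x, y, maj_ofPartialSums_iff, add_le_add_iff_left, not_and_or, not_le]
    exact .inl hst
  have : Countable T :=
    countable_of_strictMonotone_multiUtility (fun j => (hv j).2) hmu hxy hcross
  have hcard := Cardinal.mk_le_aleph0 (α := T)
  rw [Cardinal.mk_Ioo_real (by norm_num)] at hcard
  exact Cardinal.aleph0_lt_continuum.not_ge hcard
end

section
/- Let n ≥ 2, let P = { p ∈ ℝⁿ : p₁ ≥ p₂ ≥ … ≥ pₙ ≥ 0 and Σₖ pₖ = 1 }, and define the majorization order p ≼ₘ q iff Σₖ₌₁,…,ᵢ pₖ ≤ Σₖ₌₁,…,ᵢ qₖ for all i = 1,…,n−1. Then the family of partial-sum functions (uᵢ)ᵢ₌₁,…,ₙ₋₁ with uᵢ(p) = Σₖ₌₁,…,ᵢ pₖ is a multi-utility for (P,≼ₘ) of cardinality n−1, while (P,≼ₘ) has no realizer consisting of fewer than n−1 linear extensions and no multi-utility consisting of fewer than n−1 functions. Hence both the geometrical dimension and the Dushnik–Miller dimension of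 (P,≼ₘ) equal n−1. -/
namespace MajAux
variable {n : ℕ}

theorem ps_zero (p : Fin n → ℝ) : partialSum p 0 = 0 := by simp [partialSum]

theorem ps_succ (p : Fin n → ℝ) (i : ℕ) (h : i < n) :
    partialSum p (i + 1) = partialSum p i + p ⟨i, h⟩ := by
  unfold partialSum
  have hset : (Finset.univ.filter fun k : Fin n => (k : ℕ) < i + 1)
      = insert (⟨i, h⟩ : Fin n) (Finset.univ.filter fun k : Fin n => (k : ℕ) < i) := by
    ext k
    simp only [Finset.mem_filter, Finset.mem_univ, true_and, Finset.mem_insert, Fin.ext_iff]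
    omega
  rw [hset, Finset.sum_insert (by simp)]
  ring

theorem ps_total (p : Fin n → ℝ) : partialSum p n = ∑ k, p k := by
  unfold partialSum
  congr 1
  ext k
  simp [k.isLt]

/-- Probability vectors with equal proper partial sums are equal. -/
theorem eq_of_ps (hn : 2 ≤ n) (p q : ProbVec n)
    (h : ∀ i, 1 ≤ i → i ≤ n - 1 → partialSum p.1 i = partialSum q.1 i) : p = q := by
  have hall : ∀ i, i ≤ n → partialSum p.1 i = partialSum q.1 i := by
    intro i hi
    rcases Nat.eq_zero_or_pos i with rfl | h1
    · rw [ps_zero, ps_zero]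
    rcases eq_or_lt_of_le hi with rfl | hlt
    · rw [ps_total, ps_total, p.2.2.2, q.2.2.2]
    · exact h i h1 (by omega)
  apply Subtype.ext
  funext k
  have h1 := ps_succ p.1 k.1 k.2
  have h2 := ps_succ q.1 k.1 k.2
  have e1 := hall k.1 (le_of_lt k.2)
  have e2 := hall (k.1 + 1) k.2
  have : p.1 ⟨k.1, k.2⟩ = q.1 ⟨k.1, k.2⟩ := by linarith
  simpa using this

/-- The multi-utility characterization (part 1). -/
theorem maj_iff_fin (hn : 2 ≤ n) (p q : ProbVec n) :
    Maj p q ↔ ∀ i : Fin (n - 1), partialSum p.1 ((i : ℕ) + 1) ≤ partialSum q.1 ((i : ℕ) + 1) := by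
  constructor
  · intro h i
    have hi := i.2
    exact h (i.1 + 1) (by omega) (by omega)
  · intro h i h1 h2
    have := h ⟨i - 1, by omega⟩
    simpa [Nat.sub_add_cancel h1] using this

noncomputable def mkVec (n : ℕ) (u : ℕ → ℝ) : Fin n → ℝ := fun k => u (k.1 + 1) - u k.1

theorem ps_mkVec (u : ℕ → ℝ) (h0 : u 0 = 0) :
    ∀ i, i ≤ n → partialSum (mkVec n u) i = u i := by
  intro i
  induction i with
  | zero => intro _; rw [ps_zero, h0]
  | succ i ih =>
      intro h
      rw [ps_succ _ i (by omega), ih (by omega)]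
      simp [mkVec]

theorem mkVec_prop (hn : 2 ≤ n) (u : ℕ → ℝ) (h0 : u 0 = 0) (h1 : u n = 1)
    (hconc : ∀ k, k + 2 ≤ n → u (k+2) - u (k+1) ≤ u (k+1) - u k)
    (hlast : 0 ≤ u n - u (n-1)) :
    (∀ i j : Fin n, i ≤ j → mkVec n u j ≤ mkVec n u i) ∧
      (∀ i, 0 ≤ mkVec n u i) ∧ ∑ k, mkVec n u k = 1 := by
  have key : ∀ a b : ℕ, a ≤ b → b < n → u (b+1) - u b ≤ u (a+1) - u a := by
    intro a b hab
    induction b, hab using Nat.le_induction with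
    | base => intro _; exact le_refl _
    | succ b hab ih =>
        intro hb
        have h1 := hconc b (by omega)
        have h2 := ih (by omega)
        linarith
  have hmono : ∀ i j : Fin n, i ≤ j → mkVec n u j ≤ mkVec n u i := by
    intro i j hij
    exact key i.1 j.1 hij j.2
  refine ⟨hmono, ?_, ?_⟩
  · intro k
    have hk := key k.1 (n-1) (by omega) (by omega)
    have he : n - 1 + 1 = n := by omega
    rw [he] at hk
    simp only [mkVec]
    linarith
  · rw [← ps_total, ps_mkVec u h0 n le_rfl, h1]

/-- Build a probability vector from a prescribed partial-sum function. -/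
noncomputable def mkProb (n : ℕ) (hn : 2 ≤ n) (u : ℕ → ℝ) (h0 : u 0 = 0) (h1 : u n = 1)
    (hconc : ∀ k, k + 2 ≤ n → u (k+2) - u (k+1) ≤ u (k+1) - u k)
    (hlast : 0 ≤ u n - u (n-1)) : ProbVec n :=
  ⟨mkVec n u, mkVec_prop hn u h0 h1 hconc hlast⟩

theorem ps_mkProb (hn : 2 ≤ n) (u : ℕ → ℝ) (h0 : u 0 = 0) (h1 : u n = 1)
    (hconc : ∀ k, k + 2 ≤ n → u (k+2) - u (k+1) ≤ u (k+1) - u k)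
    (hlast : 0 ≤ u n - u (n-1)) (i : ℕ) (hi : i ≤ n) :
    partialSum (mkProb n hn u h0 h1 hconc hlast).1 i = u i :=
  ps_mkVec u h0 i hi

/-- The base concave partial-sum profile. -/
noncomputable def cbase (n : ℕ) : ℕ → ℝ :=
  fun i => ((i : ℝ) * (2 * (n : ℝ) + 1 - (i : ℝ))) / ((n : ℝ) * ((n : ℝ) + 1))

noncomputable def eps (n : ℕ) : ℝ := 1 / (2 * (n : ℝ) * ((n : ℝ) + 1))

theorem eps_pos (hn : 2 ≤ n) : 0 < eps n := by
  have h : (0 : ℝ) < (n : ℝ) := by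
    have : 0 < n := by omega
    exact_mod_cast this
  unfold eps
  positivity

theorem cbase_zero : cbase n 0 = 0 := by simp [cbase]

theorem cbase_n (hn : 2 ≤ n) : cbase n n = 1 := by
  have h : (0 : ℝ) < (n : ℝ) := by
    have : 0 < n := by omega
    exact_mod_cast this
  unfold cbase
  rw [div_eq_one_iff_eq (by positivity)]
  ring

theorem cgap (hn : 2 ≤ n) (k : ℕ) :
    cbase n (k+2) - cbase n (k+1) = cbase n (k+1) - cbase n k - 4 * eps n := by
  have h : (0 : ℝ) < (n : ℝ) := by
    have : 0 < n := by omega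
    exact_mod_cast this
  unfold cbase eps
  push_cast
  field_simp
  ring

theorem clast (hn : 2 ≤ n) : cbase n n - cbase n (n-1) = 4 * eps n := by
  have h : (0 : ℝ) < (n : ℝ) := by
    have : 0 < n := by omega
    exact_mod_cast this
  have hc : ((n - 1 : ℕ) : ℝ) = (n : ℝ) - 1 := by
    have : 1 ≤ n := by omega
    push_cast [this]
    ring
  unfold cbase eps
  rw [hc]
  field_simp
  ring

/-- A perturbed concave profile gives a probability vector. -/
noncomputable def pert (n : ℕ) (hn : 2 ≤ n) (e : ℕ → ℝ) (h0 : e 0 = 0) (hne : e n = 0)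
    (hnn : ∀ i, 0 ≤ e i) (hub : ∀ i, e i ≤ 2 * eps n) : ProbVec n :=
  mkProb n hn (fun i => cbase n i + e i)
    (by rw [cbase_zero, h0]; ring)
    (by rw [cbase_n hn, hne]; ring)
    (by
      intro k hk
      have hg := cgap hn k
      have h1 := hub (k+2)
      have h2 := hub k
      have h3 := hnn (k+1)
      linarith)
    (by
      have hg := clast hn
      have h1 := hnn n
      have h2 := hub (n-1)
      have h3 := eps_pos hn
      linarith)

theorem ps_pert (hn : 2 ≤ n) (e : ℕ → ℝ) (h0 : e 0 = 0) (hne : e n = 0)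
    (hnn : ∀ i, 0 ≤ e i) (hub : ∀ i, e i ≤ 2 * eps n) (i : ℕ) (hi : i ≤ n) :
    partialSum (pert n hn e h0 hne hnn hub).1 i = cbase n i + e i :=
  ps_mkProb hn _ _ _ _ _ i hi

end MajAux

/-- the geometrical and Dushnik–Miller dimensions of majorization
are both `n - 1`. -/
theorem majorization_dimensions_eq (n : ℕ) (hn : 2 ≤ n) :
    -- the partial sums form a multi-utility of cardinality `n - 1`
    (∀ p q : ProbVec n, Maj p q ↔
      ∀ i : Fin (n - 1), partialSum p.1 ((i : ℕ) + 1) ≤ partialSum q.1 ((i : ℕ) + 1)) ∧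
    -- there is a realizer of cardinality `n - 1`
    (∃ R : Fin (n - 1) → ProbVec n → ProbVec n → Prop,
      (∀ i, IsLinearExtension Maj (R i)) ∧
      (∀ p q, Maj p q ↔ ∀ i, R i p q)) ∧
    -- no realizer of cardinality less than `n - 1`
    (∀ m : ℕ, m < n - 1 →
      ¬ ∃ R : Fin m → ProbVec n → ProbVec n → Prop,
        (∀ i, IsLinearExtension Maj (R i)) ∧
        (∀ p q, Maj p q ↔ ∀ i, R i p q)) ∧
    -- no multi-utility of cardinality less than `n - 1`
    (∀ m : ℕ, m < n - 1 →
      ¬ ∃ u : Fin m → ProbVec n → ℝ,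
        ∀ p q, Maj p q ↔ ∀ i, u i p ≤ u i q) := by
  classical
  have part1 : ∀ p q : ProbVec n, Maj p q ↔
      ∀ i : Fin (n - 1), partialSum p.1 ((i : ℕ) + 1) ≤ partialSum q.1 ((i : ℕ) + 1) :=
    fun p q => MajAux.maj_iff_fin hn p q
  have hrefl : ∀ p : ProbVec n, Maj p p := fun p i _ _ => le_rfl
  have htrans : ∀ p q r : ProbVec n, Maj p q → Maj q r → Maj p r :=
    fun p q r h1 h2 i a b => le_trans (h1 i a b) (h2 i a b)
  have hanti : ∀ p q : ProbVec n, Maj p q → Maj q p → p = q :=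
    fun p q h1 h2 => MajAux.eq_of_ps hn p q (fun i a b => le_antisymm (h1 i a b) (h2 i a b))
  -- the construction used for both lower bounds
  have hconstr : ∃ A B : Fin (n-1) → ProbVec n,
      (∀ j k, j ≠ k → Maj (A j) (B k)) ∧ (∀ j, ¬ Maj (A j) (B j)) := by
    have hεpos := MajAux.eps_pos (n := n) hn
    refine ⟨fun j => MajAux.pert n hn (fun i => if i = j.1 + 1 then MajAux.eps n else 0)
        (by simp)
        (by have := j.2
            show (if n = j.1 + 1 then MajAux.eps n else 0) = 0
            rw [if_neg (by omega)])
        (by intro i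
            show (0:ℝ) ≤ if i = j.1 + 1 then MajAux.eps n else 0
            split_ifs <;> linarith)
        (by intro i
            show (if i = j.1 + 1 then MajAux.eps n else 0) ≤ 2 * MajAux.eps n
            split_ifs <;> linarith),
      fun j => MajAux.pert n hn
          (fun i => if 1 ≤ i ∧ i ≤ n - 1 ∧ i ≠ j.1 + 1 then 2 * MajAux.eps n else 0)
        (by show (if 1 ≤ 0 ∧ 0 ≤ n - 1 ∧ 0 ≠ j.1 + 1 then 2 * MajAux.eps n else 0) = 0
            rw [if_neg (by omega)])
        (by show (if 1 ≤ n ∧ n ≤ n - 1 ∧ n ≠ j.1 + 1 then 2 * MajAux.eps n else 0) = 0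
            rw [if_neg (by omega)])
        (by intro i
            show (0:ℝ) ≤ if 1 ≤ i ∧ i ≤ n - 1 ∧ i ≠ j.1 + 1 then 2 * MajAux.eps n else 0
            split_ifs <;> linarith)
        (by intro i
            show (if 1 ≤ i ∧ i ≤ n - 1 ∧ i ≠ j.1 + 1 then 2 * MajAux.eps n else 0) ≤
              2 * MajAux.eps n
            split_ifs <;> linarith), ?_, ?_⟩
    · intro j k hjk i h1 h2
      have hne : j.1 + 1 ≠ k.1 + 1 := by
        have := Fin.val_ne_of_ne hjk
        omega
      rw [MajAux.ps_pert hn _ _ _ _ _ i (by omega),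
          MajAux.ps_pert hn _ _ _ _ _ i (by omega)]
      by_cases hij : i = j.1 + 1
      · rw [if_pos hij, if_pos ⟨h1, h2, by omega⟩]
        linarith
      · rw [if_neg hij]
        split_ifs <;> linarith
    · intro j hmaj
      have hj := j.2
      have := hmaj (j.1 + 1) (by omega) (by omega)
      rw [MajAux.ps_pert hn _ _ _ _ _ _ (by omega),
          MajAux.ps_pert hn _ _ _ _ _ _ (by omega)] at this
      rw [if_pos rfl, if_neg (by omega)] at this
      linarith
  refine ⟨part1, ?_, ?_, ?_⟩
  · -- realizer of cardinality n - 1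
    haveI : IsPartialOrder (ProbVec n) Maj :=
      { refl := hrefl, trans := htrans, antisymm := hanti }
    obtain ⟨L, hL, hext⟩ := extend_partialOrder (Maj : ProbVec n → ProbVec n → Prop)
    have Lrefl : ∀ p : ProbVec n, L p p :=
      fun p => hL.toIsPartialOrder.toIsPreorder.toRefl.refl p
    have Ltrans : ∀ p q r : ProbVec n, L p q → L q r → L p r :=
      fun p q r => hL.toIsPartialOrder.toIsPreorder.toIsTrans.trans p q r
    have Lanti : ∀ p q : ProbVec n, L p q → L q p → p = q :=
      fun p q => hL.toIsPartialOrder.toAntisymm.antisymm p q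
    have Ltot : ∀ p q : ProbVec n, L p q ∨ L q p := fun p q => hL.toTotal.total p q
    set R : Fin (n-1) → ProbVec n → ProbVec n → Prop := fun i p q =>
      partialSum p.1 (i.1 + 1) < partialSum q.1 (i.1 + 1) ∨
        (partialSum p.1 (i.1 + 1) = partialSum q.1 (i.1 + 1) ∧ L p q) with hR
    have hRof : ∀ (i : Fin (n-1)) (p q : ProbVec n), Maj p q → R i p q := by
      intro i p q hm
      rcases lt_or_eq_of_le ((part1 p q).1 hm i) with h | h
      · exact Or.inl h
      · exact Or.inr ⟨h, hext p q hm⟩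
    refine ⟨R, ?_, ?_⟩
    · intro i
      refine ⟨⟨?_, ?_, ?_⟩, ?_, fun p q hm => hRof i p q hm⟩
      · intro p; exact Or.inr ⟨rfl, Lrefl p⟩
      · rintro p q (h1 | ⟨e1, l1⟩) (h2 | ⟨e2, l2⟩)
        · exact absurd h2 (lt_asymm h1)
        · exfalso; rw [e2] at h1; exact lt_irrefl _ h1
        · exfalso; rw [e1] at h2; exact lt_irrefl _ h2
        · exact Lanti p q l1 l2
      · rintro p q r (h1 | ⟨e1, l1⟩) (h2 | ⟨e2, l2⟩)
        · exact Or.inl (h1.trans h2)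
        · exact Or.inl (lt_of_lt_of_le h1 (le_of_eq e2))
        · exact Or.inl (lt_of_le_of_lt (le_of_eq e1) h2)
        · exact Or.inr ⟨e1.trans e2, Ltrans p q r l1 l2⟩
      · intro p q
        rcases lt_trichotomy (partialSum p.1 (i.1 + 1)) (partialSum q.1 (i.1 + 1)) with h | h | h
        · exact Or.inl (Or.inl h)
        · rcases Ltot p q with hl | hl
          · exact Or.inl (Or.inr ⟨h, hl⟩)
          · exact Or.inr (Or.inr ⟨h.symm, hl⟩)
        · exact Or.inr (Or.inl h)
    · intro p q
      constructor
      · intro hm i; exact hRof i p q hm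
      · intro h
        apply (part1 p q).2
        intro i
        rcases h i with h' | ⟨h', _⟩
        · exact le_of_lt h'
        · exact le_of_eq h'
  · -- no realizer of cardinality < n - 1
    rintro m hm ⟨R, hlin, hiff⟩
    obtain ⟨A, B, hAB, hnAB⟩ := hconstr
    have hex : ∀ j : Fin (n-1), ∃ i : Fin m, ¬ R i (A j) (B j) := by
      intro j
      by_contra hc
      push_neg at hc
      exact hnAB j ((hiff _ _).2 hc)
    choose f hf using hex
    obtain ⟨j, k, hjk, hfe⟩ := Fintype.exists_ne_map_eq_of_card_lt f (by simpa using hm)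
    obtain ⟨⟨hrefl', hanti', htrans'⟩, htot', hext'⟩ := hlin (f j)
    have h1 : R (f j) (B j) (A j) := (htot' _ _).resolve_left (hf j)
    have hfk : ¬ R (f j) (A k) (B k) := by rw [hfe]; exact hf k
    have h2 : R (f j) (B k) (A k) := (htot' _ _).resolve_left hfk
    have h3 : R (f j) (A j) (B k) := hext' _ _ (hAB j k hjk)
    have h4 : R (f j) (A k) (B j) := hext' _ _ (hAB k j hjk.symm)
    have h5 : R (f j) (B j) (B k) := htrans' _ _ _ h1 h3
    have h6 : R (f j) (B k) (B j) := htrans' _ _ _ h2 h4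
    have hBB : B j = B k := hanti' _ _ h5 h6
    exact hnAB j (by rw [hBB]; exact hAB j k hjk)
  · -- no multi-utility of cardinality < n - 1
    rintro m hm ⟨u, hiff⟩
    obtain ⟨A, B, hAB, hnAB⟩ := hconstr
    have hex : ∀ j : Fin (n-1), ∃ i : Fin m, u i (B j) < u i (A j) := by
      intro j
      by_contra hc
      push_neg at hc
      exact hnAB j ((hiff _ _).2 hc)
    choose f hf using hex
    obtain ⟨j, k, hjk, hfe⟩ := Fintype.exists_ne_map_eq_of_card_lt f (by simpa using hm)
    have h1 := hf j
    have h2 : u (f j) (B k) < u (f j) (A k) := by rw [hfe]; exact hf k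
    have h3 := (hiff _ _).1 (hAB j k hjk) (f j)
    have h4 := (hiff _ _).1 (hAB k j hjk.symm) (f j)
    linarith
end
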